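/- arXiv:1207.0244 — 5 statements merged into one kernel-verified Lean document; each statement's English description precedes it below -/
import Mathlib

section
/- Suppose the vanishing ideal I(X) of the degenerate projective torus X is a complete intersection generated by binomials h_1, …, h_{n−1}. Then the toric ideal P is a complete intersection generated by binomials g_1, …, g_{n−1} such that h_i = g_i(t_1^{d_1}, …, t_n^{d_n}) for i = 1, …, n−1 (i.e., h_i is obtained from g_i by substituting t_j^{d_j} for t_j). -/
/-!
Write `ψ` for the substitution `t_j ↦ t_j ^ d_j`. It sends the weight-`m` component of `f`
(weights `d`) to the degree-`m` component of `ψ f`, whose value at any point of `X` is the value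
of the former at `(1, …, 1)`; hence `P = ψ⁻¹(I(X))`. Since `ψ` has a retraction that is linear
over its image, `ψ⁻¹(ψ(J) S) = J` for every ideal `J`, so it suffices to write each generator
`h_i = t^a - t^b` as `ψ g_i`, i.e. to show that `d` divides `a` and `b`.

Evaluating `h_i` at points with a single nontrivial coordinate gives `a ≡ b [MOD d]`, so it remains
to see that `t^a` and `t^b` have no common factor `t^c`. Otherwise `h_i = t^c u` with `u ∈ I(X)` a
binomial of smaller degree, hence in the ideal of the other `n - 2` generators, which would then
generate `I(X)`. This is impossible: the exponent differences of `n - 2` binomials span a subspace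
`V ⊆ ℚⁿ` of codimension at least two, and `t^e ↦ [e] ∈ K[ℚⁿ / V]` kills those binomials but not
some `t_j ^ (q - 1) - t_l ^ (q - 1) ∈ I(X)`.
-/

open MvPolynomial

noncomputable section

theorem pow_orderOf_pow_eq_one {G : Type*} [Group G] {β : G}
    (hβ : ∀ x : G, x ∈ Subgroup.zpowers β) (x : G) (m : ℕ) : (x ^ m) ^ orderOf (β ^ m) = 1 := by
  obtain ⟨k, rfl⟩ := Subgroup.mem_zpowers_iff.mp (hβ x)
  refine orderOf_dvd_iff_pow_eq_one.mp (orderOf_dvd_of_mem_zpowers ⟨k, ?_⟩)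
  simp only [← zpow_natCast, ← zpow_mul, mul_comm]

theorem exists_mkQ_single_ne {σ F : Type*} [Field F] [Fintype σ] (V : Submodule F (σ →₀ F))
    (hV : Module.finrank F V + 2 ≤ Fintype.card σ) :
    ∃ j l, V.mkQ (Finsupp.single j 1) ≠ V.mkQ (Finsupp.single l 1) := by
  by_contra! hall
  obtain ⟨j⟩ : Nonempty σ := Fintype.card_pos_iff.mp (by omega)
  have hquot : Module.finrank F ((σ →₀ F) ⧸ V) ≤ 1 := by
    refine finrank_le_one (V.mkQ (Finsupp.single j 1)) fun w => ?_
    obtain ⟨y, rfl⟩ := V.mkQ_surjective w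
    induction y using Finsupp.induction_linear with
    | zero => exact ⟨0, by simp⟩
    | add f g hf hg =>
      obtain ⟨c, hc⟩ := hf
      obtain ⟨c', hc'⟩ := hg
      exact ⟨c + c', by rw [add_smul, hc, hc', map_add]⟩
    | single l c => exact ⟨c, by rw [hall j l, ← map_smul, Finsupp.smul_single_one]⟩
  have := V.finrank_quotient_add_finrank
  rw [Module.finrank_finsupp_self] at this
  omega

namespace MvPolynomial

variable {σ R : Type*}

section Expand

variable [CommSemiring R]

theorem monomial_one_eq_prod_X_pow [Fintype σ] (a : σ →₀ ℕ) :
    monomial a (1 : R) = ∏ j, X j ^ a j := by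
  rw [monomial_eq, C_1, one_mul, Finsupp.prod_fintype _ _ fun _ => pow_zero _]

theorem degree_pointwise_smul (d : σ → ℕ) (a : σ →₀ ℕ) :
    (d • a).degree = Finsupp.weight d a := by
  classical
  rw [Finsupp.weight_apply, Finsupp.degree_apply, Finsupp.sum]
  refine (Finset.sum_subset (s₂ := a.support) (fun j => by simp) fun j _ hj => ?_).trans ?_
  · simpa [or_iff_not_imp_left] using hj
  · exact Finset.sum_congr rfl fun j _ => by simp [mul_comm]

def expandPow (d : σ → ℕ) : MvPolynomial σ R →ₐ[R] MvPolynomial σ R :=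
  aeval fun j => X j ^ d j

theorem expandPow_monomial (d : σ → ℕ) (a : σ →₀ ℕ) (r : R) :
    expandPow d (monomial a r) = monomial (d • a) r := by
  classical
  rw [expandPow, aeval_monomial, monomial_eq,
    Finsupp.prod_of_support_subset (d • a) (s := a.support)]
  · simp [Finsupp.prod, ← pow_mul, algebraMap_eq]
  · intro j; simp
  · simp

theorem weightedHomogeneousComponent_monomial (d : σ → ℕ) (m : ℕ) (a : σ →₀ ℕ) (r : R) :
    weightedHomogeneousComponent d m (monomial a r) =
      if m = Finsupp.weight d a then monomial a r else 0 := by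
  classical
  exact weightedHomogeneousComponent_of_mem (isWeightedHomogeneous_monomial _ _ _ rfl)

theorem homogeneousComponent_expandPow (d : σ → ℕ) (m : ℕ) (f : MvPolynomial σ R) :
    homogeneousComponent m (expandPow d f) =
      expandPow d (weightedHomogeneousComponent d m f) := by
  induction f using MvPolynomial.induction_on' with
  | add p q hp hq => simp only [map_add, hp, hq]
  | monomial a r =>
    rw [weightedHomogeneousComponent_monomial, expandPow_monomial,
      homogeneousComponent_of_mem (isHomogeneous_monomial r (degree_pointwise_smul d a)),
      apply_ite (expandPow d), expandPow_monomial, map_zero]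

theorem coeff_aeval_X_pow (d : σ → ℕ) (m : ℕ) (f : MvPolynomial σ R) :
    (aeval (fun i => (Polynomial.X : Polynomial R) ^ d i) f).coeff m =
      eval 1 (weightedHomogeneousComponent d m f) := by
  induction f using MvPolynomial.induction_on' with
  | add p q hp hq => simp only [map_add, Polynomial.coeff_add, hp, hq]
  | monomial a r =>
    have hmon : aeval (fun i => (Polynomial.X : Polynomial R) ^ d i) (monomial a r) =
        Polynomial.C r * Polynomial.X ^ Finsupp.weight d a := by
      rw [aeval_monomial, Polynomial.algebraMap_eq, Finsupp.weight_apply, Finsupp.prod,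
        Finsupp.sum, ← Finset.prod_pow_eq_pow_sum]
      simp only [← pow_mul, smul_eq_mul, mul_comm]
    rw [hmon, weightedHomogeneousComponent_monomial, Polynomial.coeff_C_mul_X_pow]
    split_ifs <;> simp [eval_monomial]

variable {d : σ → ℕ}

theorem pointwise_smul_injective (hd : ∀ j, 0 < d j) :
    Function.Injective (fun a : σ →₀ ℕ => d • a) := by
  intro a b h
  ext j
  simpa [(hd j).ne'] using DFunLike.congr_fun h j

/-- Keeps the monomials all of whose exponents are divisible by `d`, and divides them by `d`. -/
def contractPow (hd : ∀ j, 0 < d j) : MvPolynomial σ R →+ MvPolynomial σ R :=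
  AddMonoidAlgebra.comapDomainAddMonoidHom _ (pointwise_smul_injective hd)

theorem coeff_contractPow (hd : ∀ j, 0 < d j) (p : MvPolynomial σ R) (a : σ →₀ ℕ) :
    coeff a (contractPow hd p) = coeff (d • a) p := by
  simp [contractPow, coeff]

theorem contractPow_expandPow_mul (hd : ∀ j, 0 < d j) (u w : MvPolynomial σ R) :
    contractPow hd (expandPow d u * w) = u * contractPow hd w := by
  classical
  induction u using MvPolynomial.induction_on' with
  | add p q hp hq => rw [map_add, add_mul, map_add, hp, hq, add_mul]
  | monomial a r =>
    ext b
    have hle : d • a ≤ d • b ↔ a ≤ b := by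
      simp only [Finsupp.le_def, Finsupp.coe_pointwise_smul, smul_eq_mul, Pi.mul_apply,
        Nat.mul_le_mul_left_iff (hd _)]
    have hsub : d • b - d • a = d • (b - a) := by
      ext j; simp [Nat.mul_sub]
    simp only [coeff_contractPow, expandPow_monomial, coeff_monomial_mul', hle, hsub]

theorem contractPow_expandPow (hd : ∀ j, 0 < d j) (u : MvPolynomial σ R) :
    contractPow hd (expandPow d u) = u := by
  classical
  have hone : contractPow hd (1 : MvPolynomial σ R) = 1 := by
    ext a
    have hzero : d • a = 0 ↔ a = 0 := (pointwise_smul_injective hd).eq_iff' (by ext; simp)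
    simp only [coeff_contractPow, coeff_one, eq_comm (a := (0 : σ →₀ ℕ)), hzero]
  simpa [hone] using contractPow_expandPow_mul hd u 1

theorem comap_expandPow_map (hd : ∀ j, 0 < d j) (J : Ideal (MvPolynomial σ R)) :
    (J.map (expandPow d)).comap (expandPow d) = J := by
  refine le_antisymm (fun f hf => ?_) Ideal.le_comap_map
  suffices ∀ x ∈ J.map (expandPow d), ∀ c, contractPow hd (c * x) ∈ J by
    simpa [contractPow_expandPow hd] using this _ hf 1
  intro x hx
  induction hx using Submodule.span_induction with
  | mem x hx =>
    obtain ⟨j, hj, rfl⟩ := hx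
    intro c
    rw [mul_comm, contractPow_expandPow_mul]
    exact J.mul_mem_right _ hj
  | zero => simp
  | add x y _ _ hx hy => intro c; rw [mul_add, map_add]; exact J.add_mem (hx c) (hy c)
  | smul c' x _ hx => intro c; rw [smul_eq_mul, ← mul_assoc]; exact hx _

end Expand

section Graded

variable [CommSemiring R]

attribute [local instance] MvPolynomial.gradedAlgebra in
theorem homogeneousComponent_mul_of_isHomogeneous {p q : MvPolynomial σ R} {i : ℕ}
    (hq : q.IsHomogeneous i) (n : ℕ) :
    homogeneousComponent n (p * q) =
      if i ≤ n then homogeneousComponent (n - i) p * q else 0 := by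
  simp_rw [← decomposition.decompose'_apply]
  exact DirectSum.coe_decompose_mul_of_right_mem (homogeneousSubmodule σ R) n (a := p) hq

theorem mem_span_image_of_isHomogeneous {ι : Type*} [Fintype ι] {h : ι → MvPolynomial σ R}
    {δ : ι → ℕ} (hh : ∀ k, (h k).IsHomogeneous (δ k)) {u : MvPolynomial σ R}
    (hu : u ∈ Ideal.span (Set.range h)) {e : ℕ} (hue : u.IsHomogeneous e) :
    u ∈ Ideal.span (h '' {k | δ k ≤ e}) := by
  obtain ⟨c, rfl⟩ := Ideal.mem_span_range_iff_exists_fun.mp hu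
  rw [← homogeneousComponent_eq_self hue, map_sum]
  refine Ideal.sum_mem _ fun k _ => ?_
  rw [homogeneousComponent_mul_of_isHomogeneous (hh k)]
  split_ifs with hk
  · exact Ideal.mul_mem_left _ _ (Ideal.subset_span ⟨k, hk, rfl⟩)
  · exact Ideal.zero_mem _

end Graded

section Binomial

variable [CommRing R]

def binomial (a b : σ →₀ ℕ) : MvPolynomial σ R := monomial a 1 - monomial b 1

theorem binomial_add_left (c a b : σ →₀ ℕ) :
    binomial (c + a) (c + b) = monomial c 1 * (binomial a b : MvPolynomial σ R) := by
  simp only [binomial, mul_sub, monomial_mul, one_mul]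

theorem isHomogeneous_binomial {a b : σ →₀ ℕ} (h : a.degree = b.degree) :
    (binomial a b : MvPolynomial σ R).IsHomogeneous a.degree :=
  (isHomogeneous_monomial _ rfl).sub (isHomogeneous_monomial _ h.symm)

end Binomial

section Torus

variable {K : Type*} [Field K]

def torusPoint (v : σ → ℕ) (x : σ → Kˣ) : σ → K := fun i => (x i : K) ^ v i

def torusIdeal (v : σ → ℕ) : Ideal (MvPolynomial σ K) :=
  Ideal.span {f | (∃ e, f.IsHomogeneous e) ∧ ∀ x : σ → Kˣ, eval (torusPoint v x) f = 0}

def toricIdeal (d : σ → ℕ) : Ideal (MvPolynomial σ K) :=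
  RingHom.ker
    (aeval (fun i => (Polynomial.X : Polynomial K) ^ d i) : MvPolynomial σ K →ₐ[K] Polynomial K)

variable {v : σ → ℕ}

theorem eval_torusPoint_eq_zero {f : MvPolynomial σ K} (hf : f ∈ torusIdeal v) (x : σ → Kˣ) :
    eval (torusPoint v x) f = 0 :=
  (Ideal.span_le (I := RingHom.ker (eval (torusPoint v x))) |>.mpr fun _ hg => hg.2 x) hf

attribute [local instance] MvPolynomial.gradedAlgebra in
theorem mem_torusIdeal_iff {f : MvPolynomial σ K} :
    f ∈ torusIdeal v ↔ ∀ m x, eval (torusPoint v x) (homogeneousComponent m f) = 0 := by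
  refine ⟨fun hf m => eval_torusPoint_eq_zero (homogeneousComponent_mem_of_mem ?_ hf m),
    fun hf => ?_⟩
  · exact Ideal.homogeneous_span _ _ fun g ⟨⟨e, hg⟩, _⟩ => ⟨e, hg⟩
  · rw [← sum_homogeneousComponent f]
    exact Ideal.sum_mem _ fun m _ =>
      Ideal.subset_span ⟨⟨m, homogeneousComponent_isHomogeneous m f⟩, hf m⟩

theorem eval_expandPow (d : σ → ℕ) (p : σ → K) (f : MvPolynomial σ K) :
    eval p (expandPow d f) = eval (fun i => p i ^ d i) f := by
  rw [expandPow, ← coe_aeval_eq_eval, ← coe_aeval_eq_eval, RingHom.coe_coe, RingHom.coe_coe,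
    ← AlgHom.comp_apply, comp_aeval]
  simp

theorem toricIdeal_eq_comap_torusIdeal {d : σ → ℕ} (hd : ∀ (x : Kˣ) i, (x ^ v i) ^ d i = 1) :
    toricIdeal d = (torusIdeal v).comap (expandPow (R := K) d) := by
  have hpt : ∀ x : σ → Kˣ, (fun i => torusPoint v x i ^ d i) = 1 := fun x => by
    ext i; simp [torusPoint, ← Units.val_pow_eq_pow_val, hd]
  ext f
  simp only [Ideal.mem_comap, mem_torusIdeal_iff, homogeneousComponent_expandPow, eval_expandPow,
    hpt, forall_const, toricIdeal, RingHom.mem_ker, Polynomial.ext_iff, coeff_aeval_X_pow,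
    Polynomial.coeff_zero]

theorem eval_torusPoint_monomial_ne_zero (a : σ →₀ ℕ) (x : σ → Kˣ) :
    eval (torusPoint v x) (monomial a 1) ≠ 0 := by
  simp [eval_monomial, Finsupp.prod, torusPoint, Finset.prod_ne_zero_iff]

theorem degree_eq_of_binomial_mem_torusIdeal {a b : σ →₀ ℕ}
    (h : binomial a b ∈ torusIdeal (K := K) v) : a.degree = b.degree := by
  by_contra hab
  have hcomp : homogeneousComponent a.degree (binomial a b : MvPolynomial σ K) =
      monomial a 1 := by
    rw [binomial, map_sub, homogeneousComponent_of_mem (isHomogeneous_monomial _ rfl),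
      homogeneousComponent_of_mem (isHomogeneous_monomial _ rfl), if_pos rfl, if_neg hab,
      sub_zero]
  exact eval_torusPoint_monomial_ne_zero a 1 (hcomp ▸ mem_torusIdeal_iff.mp h a.degree 1)

theorem binomial_mem_torusIdeal_of_add {a b c : σ →₀ ℕ}
    (h : binomial (c + a) (c + b) ∈ torusIdeal (K := K) v) :
    binomial a b ∈ torusIdeal (K := K) v := by
  have hdeg : a.degree = b.degree := by
    simpa using degree_eq_of_binomial_mem_torusIdeal h
  refine Ideal.subset_span ⟨⟨a.degree, isHomogeneous_binomial hdeg⟩, fun x => ?_⟩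
  have := eval_torusPoint_eq_zero h x
  rw [binomial_add_left, map_mul] at this
  exact (mul_eq_zero.mp this).resolve_left (eval_torusPoint_monomial_ne_zero c x)

theorem modEq_of_binomial_mem_torusIdeal [DecidableEq σ] {a b : σ →₀ ℕ}
    (h : binomial a b ∈ torusIdeal (K := K) v) (β : Kˣ) (j : σ) :
    a j ≡ b j [MOD orderOf (β ^ v j)] := by
  have hpt : ∀ c : σ →₀ ℕ, eval (torusPoint v (Pi.mulSingle j β)) (monomial c 1) =
      ((β ^ v j) ^ c j : Kˣ) := by
    intro c
    rw [eval_monomial, one_mul, Finsupp.prod_eq_single j]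
    · simp [torusPoint]
    · intro i _ hij; simp [torusPoint, hij]
    · simp
  have := eval_torusPoint_eq_zero h (Pi.mulSingle j β)
  rw [binomial, map_sub, sub_eq_zero, hpt, hpt, Units.val_inj] at this
  exact pow_eq_pow_iff_modEq.mp this

theorem binomial_single_mem_torusIdeal {M : ℕ} (hM : ∀ y : Kˣ, y ^ M = 1) (j l : σ) :
    binomial (Finsupp.single j M) (Finsupp.single l M) ∈ torusIdeal (K := K) v := by
  refine Ideal.subset_span ⟨⟨M, ?_⟩, fun x => ?_⟩
  · simpa using
      isHomogeneous_binomial (R := K) (a := Finsupp.single j M) (b := Finsupp.single l M) (by simp)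
  · have hpow : ∀ i, ((x i : K) ^ v i) ^ M = 1 := fun i => by
      rw [← Units.val_pow_eq_pow_val, ← Units.val_pow_eq_pow_val, pow_right_comm, hM,
        one_pow, Units.val_one]
    simp [binomial, eval_monomial, torusPoint, hpow]

end Torus

section Rank

variable {K : Type*} [Field K] [Fintype K] [Fintype σ] {v : σ → ℕ}

theorem card_le_card_add_one_of_torusIdeal_le_span {ι : Type*} [Fintype ι]
    (a b : ι → σ →₀ ℕ)
    (hle : torusIdeal (K := K) v ≤ Ideal.span (Set.range fun k => binomial (a k) (b k))) :
    Fintype.card σ ≤ Fintype.card ι + 1 := by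
  classical
  by_contra! hlt
  let cast : (σ →₀ ℕ) →+ (σ →₀ ℚ) := Finsupp.mapRange.addMonoidHom (Nat.castAddMonoidHom ℚ)
  let V := Submodule.span ℚ (Set.range fun k => cast (a k) - cast (b k))
  obtain ⟨j, l, hjl⟩ := exists_mkQ_single_ne V (by
    have : Module.finrank ℚ V ≤ Fintype.card ι := finrank_range_le_card _
    omega)
  let ψ : (σ →₀ ℕ) →+ (σ →₀ ℚ) ⧸ V := V.mkQ.toAddMonoidHom.comp cast
  let φ : MvPolynomial σ K →+* AddMonoidAlgebra K ((σ →₀ ℚ) ⧸ V) :=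
    AddMonoidAlgebra.mapDomainRingHom K ψ
  have hφ : ∀ a b, φ (binomial a b) = 0 ↔ ψ a = ψ b := fun a b => by
    rw [binomial, map_sub, sub_eq_zero]
    simp [φ, ← single_eq_monomial, AddMonoidAlgebra.mapDomain_single,
      AddMonoidAlgebra.single_left_inj]
  have hker : Ideal.span (Set.range fun k => binomial (a k) (b k)) ≤ RingHom.ker φ := by
    refine Ideal.span_le.mpr ?_
    rintro _ ⟨k, rfl⟩
    refine (hφ _ _).mpr ?_
    simpa [ψ, sub_eq_zero] using
      (Submodule.Quotient.mk_eq_zero V).mpr (Submodule.subset_span ⟨k, rfl⟩)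
  have hM := binomial_single_mem_torusIdeal (K := K) (v := v) (fun y => pow_card_eq_one) j l
  have hψ : ∀ i, ψ (Finsupp.single i (Fintype.card Kˣ)) =
      (Fintype.card Kˣ : ℚ) • V.mkQ (Finsupp.single i 1) := fun i => by
    simp [ψ, cast, ← Submodule.Quotient.mk_smul]
  have := (hφ _ _).mp (hker (hle hM))
  rw [hψ, hψ] at this
  exact hjl (smul_right_injective _ (by simp [Fintype.card_ne_zero]) this)

end Rank

section Minimal

variable {K : Type*} [Field K] [Fintype K] [Fintype σ] {v : σ → ℕ} {ι : Type*} [Fintype ι]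
  {h : ι → MvPolynomial σ K} {a b : ι → σ →₀ ℕ}

theorem notMem_span_range_ne (hbin : ∀ k, h k = binomial (a k) (b k))
    (hgen : torusIdeal v = Ideal.span (Set.range h)) (hcard : Fintype.card ι < Fintype.card σ)
    (i : ι) : h i ∉ Ideal.span (Set.range fun k : {k // k ≠ i} => h k) := by
  classical
  intro hi
  have hle : torusIdeal (K := K) v ≤
      Ideal.span (Set.range fun k : {k // k ≠ i} => binomial (a k) (b k)) := by
    simp_rw [← hbin]
    rw [hgen, Ideal.span_le]
    rintro _ ⟨k, rfl⟩
    by_cases hk : k = i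
    · exact hk ▸ hi
    · exact Ideal.subset_span ⟨⟨k, hk⟩, rfl⟩
  have := card_le_card_add_one_of_torusIdeal_le_span _ _ hle
  have hι : 0 < Fintype.card ι := Fintype.card_pos_iff.mpr ⟨i⟩
  simp only [Fintype.card_subtype_compl, Fintype.card_unique] at this
  omega

theorem inf_eq_zero_of_torusIdeal_eq_span (hbin : ∀ k, h k = binomial (a k) (b k))
    (hgen : torusIdeal v = Ideal.span (Set.range h)) (hcard : Fintype.card ι < Fintype.card σ)
    (i : ι) : a i ⊓ b i = 0 := by
  set c := a i ⊓ b i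
  by_contra hc
  have hmem : ∀ k, binomial (a k) (b k) ∈ torusIdeal (K := K) v := fun k =>
    hbin k ▸ hgen ▸ Ideal.subset_span ⟨k, rfl⟩
  have hhom : ∀ k, (h k).IsHomogeneous (a k).degree := fun k =>
    hbin k ▸ isHomogeneous_binomial (degree_eq_of_binomial_mem_torusIdeal (hmem k))
  have hai : c + (a i - c) = a i := add_tsub_cancel_of_le inf_le_left
  have hbi : c + (b i - c) = b i := add_tsub_cancel_of_le inf_le_right
  have hu : binomial (a i - c) (b i - c) ∈ torusIdeal (K := K) v :=
    binomial_mem_torusIdeal_of_add (hai ▸ hbi ▸ hmem i)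
  have hlt : (a i - c).degree < (a i).degree := by
    have hdeg := congrArg Finsupp.degree hai
    have hc0 : c.degree ≠ 0 := (Finsupp.degree_eq_zero_iff c).not.mpr hc
    rw [map_add] at hdeg
    omega
  have hu' := mem_span_image_of_isHomogeneous hhom (hgen ▸ hu)
    (isHomogeneous_binomial (degree_eq_of_binomial_mem_torusIdeal hu))
  apply notMem_span_range_ne hbin hgen hcard i
  rw [hbin i, ← hai, ← hbi, binomial_add_left]
  refine Ideal.mul_mem_left _ _ (Ideal.span_mono ?_ hu')
  rintro _ ⟨k, hk, rfl⟩
  exact ⟨⟨k, fun hki => by subst hki; exact hlt.not_ge hk⟩, rfl⟩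

theorem exists_eq_expandPow_binomial (hbin : ∀ k, h k = binomial (a k) (b k))
    (hgen : torusIdeal v = Ideal.span (Set.range h)) (hcard : Fintype.card ι < Fintype.card σ)
    {β : Kˣ} {d : σ → ℕ} (hd : ∀ j, d j = orderOf (β ^ v j)) (i : ι) :
    ∃ A B, h i = expandPow d (binomial A B) := by
  classical
  have hmem : binomial (a i) (b i) ∈ torusIdeal (K := K) v :=
    hbin i ▸ hgen ▸ Ideal.subset_span ⟨i, rfl⟩
  have hmod := modEq_of_binomial_mem_torusIdeal hmem β
  have hinf := inf_eq_zero_of_torusIdeal_eq_span hbin hgen hcard i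
  have hdvd : ∀ j, d j ∣ a i j ∧ d j ∣ b i j := by
    intro j
    have hmin : min (a i j) (b i j) = 0 := by simpa using DFunLike.congr_fun hinf j
    have hj := hmod j
    rw [hd, ← Nat.modEq_zero_iff_dvd, ← Nat.modEq_zero_iff_dvd]
    rcases Nat.min_eq_zero_iff.mp hmin with h0 | h0 <;> rw [h0] at hj ⊢
    · exact ⟨Nat.ModEq.refl 0, hj.symm⟩
    · exact ⟨hj, Nat.ModEq.refl 0⟩
  have hA : d • Finsupp.equivFunOnFinite.symm (fun j => a i j / d j) = a i := by
    ext j; simp [Nat.mul_div_cancel' (hdvd j).1]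
  have hB : d • Finsupp.equivFunOnFinite.symm (fun j => b i j / d j) = b i := by
    ext j; simp [Nat.mul_div_cancel' (hdvd j).2]
  refine ⟨Finsupp.equivFunOnFinite.symm fun j => a i j / d j,
    Finsupp.equivFunOnFinite.symm fun j => b i j / d j, ?_⟩
  rw [hbin i, binomial, binomial, map_sub, expandPow_monomial, expandPow_monomial, hA, hB]

end Minimal

end MvPolynomial

theorem vanishing_ideal_ci_implies_toric_ci_general
    (K : Type) [Field K] [Fintype K] (n : ℕ)
    (v : Fin n → ℕ)
    (β : Kˣ) (hβ : ∀ x : Kˣ, x ∈ Subgroup.zpowers β)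
    (d : Fin n → ℕ) (hd : ∀ i, d i = orderOf (β ^ v i))
    (IX : Ideal (MvPolynomial (Fin n) K))
    (hIX : IX = Ideal.span {f : MvPolynomial (Fin n) K |
      (∃ e, f.IsHomogeneous e) ∧
      ∀ x : Fin n → Kˣ, eval (fun i => (x i : K) ^ v i) f = 0})
    (P : Ideal (MvPolynomial (Fin n) K))
    (hP : P = RingHom.ker (aeval (fun i : Fin n => (Polynomial.X : Polynomial K) ^ d i) :
      MvPolynomial (Fin n) K →ₐ[K] Polynomial K))
    (h : Fin (n - 1) → MvPolynomial (Fin n) K)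
    (hbin : ∀ i, ∃ a b : Fin n → ℕ,
      h i = (∏ j, X j ^ a j) - ∏ j, X j ^ b j)
    (hgen : IX = Ideal.span (Set.range h)) :
    ∃ g : Fin (n - 1) → MvPolynomial (Fin n) K,
      (∀ i, ∃ a b : Fin n → ℕ,
        g i = (∏ j, X j ^ a j) - ∏ j, X j ^ b j) ∧
      P = Ideal.span (Set.range g) ∧
      ∀ i, h i = aeval (fun j : Fin n => (X j : MvPolynomial (Fin n) K) ^ d j) (g i) := by
  choose a b hab using hbin
  have hbin : ∀ i, h i = binomial (Finsupp.equivFunOnFinite.symm (a i))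
      (Finsupp.equivFunOnFinite.symm (b i)) := fun i => by
    simp [hab, binomial, monomial_one_eq_prod_X_pow]
  have hgen' : torusIdeal v = Ideal.span (Set.range h) := by rw [← hgen, hIX]; rfl
  have hcard (i : Fin (n - 1)) : Fintype.card (Fin (n - 1)) < Fintype.card (Fin n) := by
    have := i.isLt
    simp only [Fintype.card_fin]
    omega
  choose A B hAB using fun i => exists_eq_expandPow_binomial hbin hgen' (hcard i) hd i
  have hrange : Set.range h = expandPow d '' Set.range fun i => binomial (A i) (B i) := by
    rw [← Set.range_comp]; exact congrArg Set.range (funext hAB)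
  have hpow (x : Kˣ) (i : Fin n) : (x ^ v i) ^ d i = 1 := hd i ▸ pow_orderOf_pow_eq_one hβ x (v i)
  refine ⟨fun i => binomial (A i) (B i), fun i => ⟨A i, B i, ?_⟩, ?_, hAB⟩
  · simp [binomial, monomial_one_eq_prod_X_pow]
  · rw [hP, ← toricIdeal, toricIdeal_eq_comap_torusIdeal hpow, hgen', hrange, ← Ideal.map_span,
      comap_expandPow_map fun j => hd j ▸ orderOf_pos _]

/-- **Theorem (a).** Let `K = 𝔽_q` be a finite field, `β` a generator of `Kˣ`,
`v : Fin n → ℕ` positive integers, `d i = orderOf (β ^ v i)`.  Let `IX` be the vanishing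
ideal of the degenerate projective torus parameterized by `x_i ^ v_i` (the ideal generated
by the homogeneous polynomials vanishing at all points of the torus), and let `P` be the
toric ideal, i.e. the kernel of `t_i ↦ y ^ d i`.  If `IX` is a complete intersection
generated by binomials `h 0, …, h (n-2)`, then `P` is a complete intersection generated by
binomials `g 0, …, g (n-2)` with `h i = g i (t_1 ^ d 1, …, t_n ^ d n)` for all `i`. -/
theorem vanishing_ideal_ci_implies_toric_ci
    (K : Type) [Field K] [Fintype K] (n : ℕ) (hn : 2 ≤ n)
    (v : Fin n → ℕ) (hv : ∀ i, 0 < v i)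
    (β : Kˣ) (hβ : ∀ x : Kˣ, x ∈ Subgroup.zpowers β)
    (d : Fin n → ℕ) (hd : ∀ i, d i = orderOf (β ^ v i))
    (IX : Ideal (MvPolynomial (Fin n) K))
    (hIX : IX = Ideal.span {f : MvPolynomial (Fin n) K |
      (∃ e, f.IsHomogeneous e) ∧
      ∀ x : Fin n → Kˣ, eval (fun i => (x i : K) ^ v i) f = 0})
    (P : Ideal (MvPolynomial (Fin n) K))
    (hP : P = RingHom.ker (aeval (fun i : Fin n => (Polynomial.X : Polynomial K) ^ d i) :
      MvPolynomial (Fin n) K →ₐ[K] Polynomial K))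
    (h : Fin (n - 1) → MvPolynomial (Fin n) K)
    (hbin : ∀ i, ∃ a b : Fin n → ℕ,
      h i = (∏ j, X j ^ a j) - ∏ j, X j ^ b j)
    (hgen : IX = Ideal.span (Set.range h)) :
    ∃ g : Fin (n - 1) → MvPolynomial (Fin n) K,
      (∀ i, ∃ a b : Fin n → ℕ,
        g i = (∏ j, X j ^ a j) - ∏ j, X j ^ b j) ∧
      P = Ideal.span (Set.range g) ∧
      ∀ i, h i = aeval (fun j : Fin n => (X j : MvPolynomial (Fin n) K) ^ d j) (g i) :=
  vanishing_ideal_ci_implies_toric_ci_general K n v β hβ d hd IX hIX P hP h hbin hgen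
end
end

section
/- The vanishing ideal I(X) of the degenerate projective torus X is a complete intersection if and only if the toric ideal P is a complete intersection. -/
/-!
Let `ρ` be the `K`-algebra endomorphism `tᵢ ↦ tᵢ ^ dᵢ` of `S`. As `x ↦ x ^ vᵢ` maps `Kˣ` onto the
`dᵢ`-th roots of unity, the characters `x ↦ ∏ xᵢ ^ (vᵢ cᵢ)` of the torus, `c ∈ ∏ ℤ/dᵢ`, are pairwise
distinct. By Dedekind's independence of characters a homogeneous `f` vanishes on `X` iff, in every
class of exponents modulo `d`, its coefficients sum to zero; that is, `f = ∑_c t^c ρ(g_c)` with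
`g_c ∈ P`. Hence `I(X) = ρ(P) S`, and generators of `P` give generators of `I(X)`.

Conversely `I(X)` is homogeneous for the grading of `S` by (class of the exponent modulo `d`,
degree), in which every variable has positive degree, so graded Nakayama turns `n - 1` generators
into `n - 1` homogeneous ones, each of the form `t^c ρ(g)` with `g ∈ P`. Finally `S` is free over
`ρ(S)` with `1` among its basis monomials, so `ρ(J) S ∩ ρ(S) = ρ(J)` for every ideal `J`, whence
`P` is generated by the `g`'s.
-/

open MvPolynomial

lemma pow_pow_orderOf_pow_eq_one {G : Type*} [Group G] {β x : G} (hx : x ∈ Subgroup.zpowers β)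
    (v : ℕ) : (x ^ v) ^ orderOf (β ^ v) = 1 := by
  obtain ⟨k, rfl⟩ := hx
  calc ((β ^ k) ^ v) ^ orderOf (β ^ v) = ((β ^ v) ^ orderOf (β ^ v)) ^ k := by
        simp only [← zpow_natCast, ← zpow_mul]
        ring_nf
    _ = 1 := by rw [pow_orderOf_eq_one, one_zpow]

lemma exists_fin_range_subset {α : Type*} (s : Finset α) (a : α) {r : ℕ} (hr : s.card ≤ r) :
    ∃ F : Fin r → α, ↑s ⊆ Set.range F ∧ Set.range F ⊆ insert a ↑s := by
  let e := s.equivFin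
  refine ⟨fun j => if hj : (j : ℕ) < s.card then e.symm ⟨j, hj⟩ else a, fun x hx => ?_, ?_⟩
  · exact ⟨Fin.castLE hr (e ⟨x, hx⟩), by simp⟩
  · rintro - ⟨j, rfl⟩
    dsimp only
    split_ifs
    exacts [Or.inr (Subtype.coe_prop _), Or.inl rfl]

lemma exists_finset_subset_card_le_span_image {K V W : Type*} [Field K] [AddCommGroup V]
    [Module K V] [AddCommGroup W] [Module K W] (π : V →ₗ[K] W) (C : Set V) {ι : Type*} [Fintype ι]
    (h : ι → W) (hC : π '' C ⊆ Submodule.span K (Set.range h)) :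
    ∃ s : Finset V, ↑s ⊆ C ∧ s.card ≤ Fintype.card ι ∧
      Submodule.span K (π '' C) ≤ (Submodule.span K (s : Set V)).map π := by
  classical
  obtain ⟨κ, a, -, hspan, hli⟩ := exists_linearIndependent' K (fun x : C => π x)
  have hCh : Set.range ((fun x : C => π x) ∘ a) ⊆ Submodule.span K (Set.range h) := by
    rintro - ⟨k, rfl⟩
    exact hC ⟨_, (a k).2, rfl⟩
  have := hli.finite_of_le_span_finite _ _ hCh
  let _ := Fintype.ofFinite κ
  refine ⟨Finset.univ.image fun k => (a k : V), ?_, ?_, ?_⟩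
  · simp only [Finset.coe_image, Finset.coe_univ, Set.image_univ]
    rintro - ⟨k, rfl⟩
    exact (a k).2
  · exact Finset.card_image_le.trans <| (linearIndependent_le_span_aux' _ hli _ hCh).trans
      (Fintype.card_range_le _)
  · rw [Submodule.map_span, Set.image_eq_range, ← hspan, Finset.coe_image, Finset.coe_univ,
      Set.image_univ, ← Set.range_comp]
    rfl

namespace MvPolynomial

variable {σ R M : Type*} [CommRing R] [AddCommMonoid M] {w : σ → M}

lemma map_weight_eq_weight_comp (deg : M →+ ℕ) (m : σ →₀ ℕ) :
    deg (Finsupp.weight w m) = Finsupp.weight (deg ∘ w) m := by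
  simp [Finsupp.weight_apply, map_finsuppSum]

lemma exists_sub_mem_ker_constantCoeff_mul {ι : Type*} [Fintype ι] {h : ι → MvPolynomial σ R}
    {x : MvPolynomial σ R} (hx : x ∈ Ideal.span (Set.range h)) :
    ∃ y ∈ Submodule.span R (Set.range h),
      x - y ∈ RingHom.ker constantCoeff * Ideal.span (Set.range h) := by
  obtain ⟨a, rfl⟩ := Ideal.mem_span_range_iff_exists_fun.mp hx
  refine ⟨∑ k, constantCoeff (a k) • h k,
    Submodule.sum_mem _ fun k _ => Submodule.smul_mem _ _ (Submodule.subset_span ⟨k, rfl⟩), ?_⟩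
  rw [← Finset.sum_sub_distrib]
  refine Ideal.sum_mem _ fun k _ => ?_
  rw [smul_eq_C_mul, ← sub_mul]
  exact Ideal.mul_mem_mul (by simp [RingHom.mem_ker]) (Ideal.subset_span ⟨k, rfl⟩)

variable [DecidableEq M]

attribute [local instance] weightedGradedAlgebra

variable (w) in
lemma sum_weightedHomogeneousComponent_image (φ : MvPolynomial σ R) :
    ∑ γ ∈ φ.support.image (Finsupp.weight w), weightedHomogeneousComponent w γ φ = φ := by
  conv_rhs => rw [← sum_weightedHomogeneousComponent w φ]
  refine (finsum_eq_sum_of_support_subset _ fun γ hγ => ?_).symm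
  by_contra hγ'
  exact hγ (weightedHomogeneousComponent_eq_zero_of_notMem w φ γ hγ')

lemma weightedHomogeneousComponent_mul_mem {J : Ideal (MvPolynomial σ R)}
    {p q : MvPolynomial σ R} {γ : M}
    (h : ∀ γ₁ γ₂, γ₁ + γ₂ = γ → weightedHomogeneousComponent w γ₁ p ≠ 0 →
      weightedHomogeneousComponent w γ₂ q ∈ J) :
    weightedHomogeneousComponent w γ (p * q) ∈ J := by
  rw [← sum_weightedHomogeneousComponent_image w p, ← sum_weightedHomogeneousComponent_image w q,
    Finset.sum_mul_sum, map_sum]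
  refine Ideal.sum_mem _ fun γ₁ _ => ?_
  rw [map_sum]
  refine Ideal.sum_mem _ fun γ₂ _ => ?_
  have hmul := (weightedHomogeneousComponent_isWeightedHomogeneous (w := w) γ₁ p).mul
    (weightedHomogeneousComponent_isWeightedHomogeneous γ₂ q)
  by_cases hγ : γ₁ + γ₂ = γ
  · rw [← hγ, hmul.weightedHomogeneousComponent_same]
    by_cases h0 : weightedHomogeneousComponent w γ₁ p = 0
    · rw [h0, zero_mul]
      exact J.zero_mem
    · exact J.mul_mem_left _ (h γ₁ γ₂ hγ h0)
  · rw [hmul.weightedHomogeneousComponent_ne γ (Ne.symm hγ)]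
    exact J.zero_mem

lemma pos_of_weightedHomogeneousComponent_ne_zero {deg : M →+ ℕ} (hw : ∀ i, 0 < deg (w i))
    {p : MvPolynomial σ R} (hp : constantCoeff p = 0) {γ : M}
    (h : weightedHomogeneousComponent w γ p ≠ 0) : 0 < deg γ := by
  obtain ⟨m, hm⟩ := ne_zero_iff.mp h
  rw [coeff_weightedHomogeneousComponent, ite_ne_right_iff] at hm
  obtain ⟨hγ, hm⟩ := hm
  obtain ⟨i, hi⟩ : ∃ i, m i ≠ 0 := by
    by_contra! h0
    rw [show m = 0 from Finsupp.ext h0, ← constantCoeff_eq] at hm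
    exact hm hp
  rw [← hγ, map_weight_eq_weight_comp]
  exact (hw i).trans_le (Finsupp.le_weight_of_ne_zero' (deg ∘ w) hi)

lemma exists_finset_isWeightedHomogeneous_sub_mem {K : Type*} [Field K]
    {I : Ideal (MvPolynomial σ K)} (hI : I.IsHomogeneous (weightedHomogeneousSubmodule K w))
    {ι : Type*} [Fintype ι] (h : ι → MvPolynomial σ K) (hIh : I = Ideal.span (Set.range h)) :
    ∃ s : Finset (MvPolynomial σ K), s.card ≤ Fintype.card ι ∧
      (∀ x ∈ s, x ∈ I ∧ ∃ γ, IsWeightedHomogeneous w x γ) ∧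
      ∀ x ∈ I, ∃ y ∈ Submodule.span K (s : Set (MvPolynomial σ K)),
        x - y ∈ RingHom.ker constantCoeff * I := by
  set π := (Ideal.Quotient.mkₐ K (RingHom.ker constantCoeff * I)).toLinearMap
  set C := {x | x ∈ I ∧ ∃ γ, IsWeightedHomogeneous w x γ}
  have hIh' : ∀ x ∈ I, π x ∈ Submodule.span K (Set.range (π ∘ h)) := by
    intro x hx
    obtain ⟨y, hy, hxy⟩ := exists_sub_mem_ker_constantCoeff_mul (hIh ▸ hx)
    rw [Set.range_comp, Submodule.span_image,
      show π x = π y from Ideal.Quotient.eq.mpr (hIh ▸ hxy)]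
    exact Submodule.mem_map_of_mem hy
  have hhC : Submodule.span K (Set.range (π ∘ h)) ≤ Submodule.span K (π '' C) := by
    refine Submodule.span_le.mpr ?_
    rintro - ⟨k, rfl⟩
    rw [Function.comp_apply, ← sum_weightedHomogeneousComponent_image w (h k), map_sum]
    refine Submodule.sum_mem _ fun γ _ => Submodule.subset_span ⟨_, ⟨?_, γ,
      weightedHomogeneousComponent_isWeightedHomogeneous γ (h k)⟩, rfl⟩
    exact weightedHomogeneousComponent_mem_of_mem K w hI (hIh ▸ Ideal.subset_span ⟨k, rfl⟩) γ
  obtain ⟨s, hsC, hcard, hs⟩ := exists_finset_subset_card_le_span_image π C (π ∘ h)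
    fun _ ⟨x, hx, hxy⟩ => hxy ▸ hIh' x hx.1
  refine ⟨s, hcard, fun x hx => hsC hx, fun x hx => ?_⟩
  obtain ⟨y, hy, hyx⟩ := Submodule.mem_map.mp (hs (hhC (hIh' x hx)))
  exact ⟨y, hy, Ideal.Quotient.eq.mp hyx.symm⟩

variable {deg : M →+ ℕ} (hw : ∀ i, 0 < deg (w i))
include hw

lemma le_of_le_sup_ker_constantCoeff_mul {I J : Ideal (MvPolynomial σ R)}
    (hI : I.IsHomogeneous (weightedHomogeneousSubmodule R w))
    (hJ : J.IsHomogeneous (weightedHomogeneousSubmodule R w))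
    (hIJ : I ≤ J ⊔ RingHom.ker (constantCoeff : MvPolynomial σ R →+* R) * I) : I ≤ J := by
  -- Induction on `deg γ`: the `γ`-component of an element of `ker constantCoeff * I` only
  -- involves components of elements of `I` of smaller degree.
  suffices key : ∀ N, ∀ x ∈ I, ∀ γ, deg γ < N → weightedHomogeneousComponent w γ x ∈ J from
    fun x hx => (mem_iff_weightedHomogeneousComponent_mem R w hJ x).mpr fun γ =>
      key _ x hx γ (Nat.lt_succ_self _)
  intro N
  induction N with
  | zero => exact fun x _ γ h => absurd h (Nat.not_lt_zero _)
  | succ N ih =>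
    intro x hx γ hγ
    obtain ⟨y, hy, z, hz, hyz⟩ :=
      Submodule.mem_sup.mp (hIJ (weightedHomogeneousComponent_mem_of_mem R w hI hx γ))
    have hz' : weightedHomogeneousComponent w γ z ∈ J := by
      refine Submodule.mul_induction_on hz (fun p hp q hq => ?_) (fun a b ha hb => ?_)
      · refine weightedHomogeneousComponent_mul_mem fun γ₁ γ₂ hsum hne => ih q hq γ₂ ?_
        have h1 := pos_of_weightedHomogeneousComponent_ne_zero hw (RingHom.mem_ker.mp hp) hne
        have h2 := congrArg deg hsum
        rw [map_add] at h2
        omega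
      · rw [map_add]
        exact J.add_mem ha hb
    have hx' : weightedHomogeneousComponent w γ (y + z) = weightedHomogeneousComponent w γ x := by
      rw [hyz,
        (weightedHomogeneousComponent_isWeightedHomogeneous γ x).weightedHomogeneousComponent_same]
    rw [← hx', map_add]
    exact J.add_mem (weightedHomogeneousComponent_mem_of_mem R w hJ hy γ) hz'

lemma exists_isWeightedHomogeneous_span_range_eq {K : Type*} [Field K]
    {I : Ideal (MvPolynomial σ K)} (hI : I.IsHomogeneous (weightedHomogeneousSubmodule K w))
    {r : ℕ} (h : Fin r → MvPolynomial σ K) (hIh : I = Ideal.span (Set.range h)) :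
    ∃ F : Fin r → MvPolynomial σ K,
      (∀ j, ∃ γ, IsWeightedHomogeneous w (F j) γ) ∧ I = Ideal.span (Set.range F) := by
  obtain ⟨s, hcard, hs, hIs⟩ := exists_finset_isWeightedHomogeneous_sub_mem hI h hIh
  obtain ⟨F, hsF, hFs⟩ := exists_fin_range_subset s 0 (hcard.trans_eq (Fintype.card_fin r))
  have hF : ∀ j, F j ∈ I ∧ ∃ γ, IsWeightedHomogeneous w (F j) γ := fun j => by
    rcases hFs ⟨j, rfl⟩ with h0 | hj
    · exact h0 ▸ ⟨I.zero_mem, 0, isWeightedHomogeneous_zero K w 0⟩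
    · exact hs _ hj
  refine ⟨F, fun j => (hF j).2, le_antisymm ?_ (Ideal.span_le.mpr ?_)⟩
  · refine le_of_le_sup_ker_constantCoeff_mul hw hI
      (Ideal.homogeneous_span _ _ fun x ⟨j, hj⟩ => hj ▸ (hF j).2) fun x hx => ?_
    obtain ⟨y, hy, hxy⟩ := hIs x hx
    rw [← add_sub_cancel y x]
    exact Submodule.add_mem_sup
      (Submodule.span_le_restrictScalars K _ _ (Submodule.span_mono hsF hy)) hxy
  · rintro - ⟨j, rfl⟩
    exact (hF j).1

end MvPolynomial

namespace DegenerateTorus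

variable {σ R : Type*} [CommRing R]

section Maps

variable (R) (d : σ → ℕ)

noncomputable def powMap : MvPolynomial σ R →ₐ[R] MvPolynomial σ R := aeval fun i => X i ^ d i

noncomputable def toricMap : MvPolynomial σ R →ₐ[R] Polynomial R :=
  aeval fun i => Polynomial.X ^ d i

noncomputable def torusVanishingIdeal (v : σ → ℕ) : Ideal (MvPolynomial σ R) :=
  ⨅ x : σ → Rˣ, RingHom.ker (eval fun i => (x i : R) ^ v i)

variable {R d}

lemma mem_torusVanishingIdeal {v : σ → ℕ} {f : MvPolynomial σ R} :
    f ∈ torusVanishingIdeal R v ↔ ∀ x : σ → Rˣ, eval (fun i => (x i : R) ^ v i) f = 0 := by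
  simp [torusVanishingIdeal]

lemma eval_powMap (y : σ → R) (g : MvPolynomial σ R) :
    eval y (powMap R d g) = eval (fun i => y i ^ d i) g := by
  change aeval y (aeval _ g) = aeval _ g
  rw [← AlgHom.comp_apply, comp_aeval]
  simp

lemma eval_one_eq_eval_toricMap (g : MvPolynomial σ R) :
    eval (fun _ => 1) g = (toricMap R d g).eval 1 := by
  rw [toricMap, ← Polynomial.coe_aeval_eq_eval, ← AlgHom.comp_apply, comp_aeval]
  simp

lemma powMap_mem_torusVanishingIdeal {v : σ → ℕ} {β : Rˣ}
    (hβ : ∀ x : Rˣ, x ∈ Subgroup.zpowers β) (hd : ∀ i, d i = orderOf (β ^ v i))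
    {g : MvPolynomial σ R} (hg : g ∈ RingHom.ker (toricMap R d)) :
    powMap R d g ∈ torusVanishingIdeal R v := by
  refine mem_torusVanishingIdeal.mpr fun x => ?_
  have hroot : (fun i => ((x i : R) ^ v i) ^ d i) = fun _ => 1 := by
    funext i
    rw [← Units.val_pow_eq_pow_val, ← Units.val_pow_eq_pow_val, hd i,
      pow_pow_orderOf_pow_eq_one (hβ (x i)), Units.val_one]
  rw [eval_powMap, hroot, eval_one_eq_eval_toricMap, RingHom.mem_ker.mp hg, Polynomial.eval_zero]

lemma map_powMap_le_torusVanishingIdeal {v : σ → ℕ} {β : Rˣ}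
    (hβ : ∀ x : Rˣ, x ∈ Subgroup.zpowers β) (hd : ∀ i, d i = orderOf (β ^ v i)) :
    (RingHom.ker (toricMap R d)).map (powMap R d) ≤ torusVanishingIdeal R v :=
  Ideal.map_le_iff_le_comap.mpr fun _ hg => powMap_mem_torusVanishingIdeal hβ hd hg

end Maps

variable [Fintype σ]

section Exponents

variable (d : σ → ℕ)

noncomputable def expMul (m : σ →₀ ℕ) : σ →₀ ℕ := Finsupp.equivFunOnFinite.symm (d * ⇑m)

noncomputable def divExp (m : σ →₀ ℕ) : σ →₀ ℕ := Finsupp.equivFunOnFinite.symm fun i => m i / d i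

def residue (m : σ →₀ ℕ) (i : σ) : ZMod (d i) := m i

noncomputable def residueRep (c : (i : σ) → ZMod (d i)) : σ →₀ ℕ :=
  Finsupp.equivFunOnFinite.symm fun i => (c i).val

@[simp] lemma expMul_apply (m : σ →₀ ℕ) (i : σ) : expMul d m i = d i * m i := rfl

@[simp] lemma divExp_apply (m : σ →₀ ℕ) (i : σ) : divExp d m i = m i / d i := rfl

@[simp] lemma residueRep_apply (c : (i : σ) → ZMod (d i)) (i : σ) :
    residueRep d c i = (c i).val := rfl

lemma residueRep_residue_add_expMul_divExp (m : σ →₀ ℕ) :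
    residueRep d (residue d m) + expMul d (divExp d m) = m := by
  ext i
  simp [residue, ZMod.val_natCast, Nat.mod_add_div]

lemma residue_expMul (m : σ →₀ ℕ) : residue d (expMul d m) = 0 := by
  funext i
  simp [residue]

lemma residue_add_expMul (u m : σ →₀ ℕ) : residue d (u + expMul d m) = residue d u := by
  funext i
  simp [residue]

lemma divExp_add_expMul (hd : ∀ i, 0 < d i) (u m : σ →₀ ℕ) :
    divExp d (u + expMul d m) = divExp d u + m := by
  ext i
  simp [Nat.add_mul_div_left _ _ (hd i)]

lemma degree_expMul (m : σ →₀ ℕ) : (expMul d m).degree = Finsupp.weight d m := by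
  simp [Finsupp.degree_eq_sum, Finsupp.weight_eq_sum, mul_comm]

end Exponents

section ClassPart

variable (R) (d : σ → ℕ) in
noncomputable def classPart (c : (i : σ) → ZMod (d i)) :
    MvPolynomial σ R →ₗ[R] MvPolynomial σ R :=
  (basisMonomials σ R).constr R fun m => if residue d m = c then monomial (divExp d m) 1 else 0

variable {d : σ → ℕ}

lemma powMap_monomial (m : σ →₀ ℕ) (a : R) :
    powMap R d (monomial m a) = monomial (expMul d m) a := by
  rw [powMap, aeval_monomial, monomial_eq, Finsupp.prod_fintype _ _ (fun i => by simp),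
    Finsupp.prod_fintype _ _ (fun i => by simp)]
  simp [← pow_mul, algebraMap_eq]

lemma toricMap_monomial (m : σ →₀ ℕ) (a : R) :
    toricMap R d (monomial m a) = Polynomial.monomial (Finsupp.weight d m) a := by
  rw [toricMap, aeval_monomial, Finsupp.prod_fintype _ _ (fun i => by simp)]
  simp_rw [← pow_mul, Finset.prod_pow_eq_pow_sum, ← Polynomial.C_mul_X_pow_eq_monomial,
    Finsupp.weight_eq_sum, smul_eq_mul, mul_comm, Polynomial.algebraMap_eq]

lemma classPart_monomial (c : (i : σ) → ZMod (d i)) (m : σ →₀ ℕ) (a : R) :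
    classPart R d c (monomial m a) = if residue d m = c then monomial (divExp d m) a else 0 := by
  rw [show monomial m a = a • monomial m (1 : R) by rw [smul_monomial, smul_eq_mul, mul_one],
    map_smul, classPart, show monomial m (1 : R) = basisMonomials σ R m from rfl,
    Module.Basis.constr_basis]
  split_ifs <;> simp [smul_monomial]

lemma classPart_apply (c : (i : σ) → ZMod (d i)) (f : MvPolynomial σ R) :
    classPart R d c f =
      ∑ m ∈ f.support with residue d m = c, monomial (divExp d m) (coeff m f) := by
  conv_lhs => rw [f.as_sum]
  rw [map_sum, Finset.sum_filter]
  simp only [classPart_monomial]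

lemma monomial_residueRep_mul_powMap_classPart (c : (i : σ) → ZMod (d i))
    (f : MvPolynomial σ R) :
    monomial (residueRep d c) 1 * powMap R d (classPart R d c f) =
      ∑ m ∈ f.support with residue d m = c, monomial m (coeff m f) := by
  rw [classPart_apply, map_sum, Finset.mul_sum]
  refine Finset.sum_congr rfl fun m hm => ?_
  rw [powMap_monomial, monomial_mul, one_mul, ← (Finset.mem_filter.mp hm).2,
    residueRep_residue_add_expMul_divExp]

lemma sum_monomial_residueRep_mul_powMap_classPart (f : MvPolynomial σ R) :
    ∑ c ∈ f.support.image (residue d), monomial (residueRep d c) 1 * powMap R d (classPart R d c f)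
      = f := by
  simp_rw [monomial_residueRep_mul_powMap_classPart]
  rw [Finset.sum_fiberwise_of_maps_to fun m hm => Finset.mem_image_of_mem _ hm,
    support_sum_monomial_coeff]

lemma classPart_mul_powMap (hd : ∀ i, 0 < d i) (c : (i : σ) → ZMod (d i))
    (f g : MvPolynomial σ R) :
    classPart R d c (f * powMap R d g) = classPart R d c f * g := by
  induction f using MvPolynomial.induction_on' with
  | add f₁ f₂ h₁ h₂ => rw [add_mul, map_add, map_add, h₁, h₂, add_mul]
  | monomial u a =>
    induction g using MvPolynomial.induction_on' with
    | add g₁ g₂ h₁ h₂ => rw [map_add, mul_add, map_add, h₁, h₂, mul_add]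
    | monomial m b =>
      rw [powMap_monomial, monomial_mul, classPart_monomial, classPart_monomial,
        residue_add_expMul, divExp_add_expMul d hd]
      split_ifs <;> simp [monomial_mul]

lemma classPart_zero_powMap (hd : ∀ i, 0 < d i) (g : MvPolynomial σ R) :
    classPart R d 0 (powMap R d g) = g := by
  have h1 : classPart R d 0 (1 : MvPolynomial σ R) = 1 := by
    have h0 : divExp d (0 : σ →₀ ℕ) = 0 := by ext; simp
    rw [← C_1, ← monomial_zero', classPart_monomial, if_pos (by funext; simp [residue]), h0]
  rw [← one_mul (powMap R d g), classPart_mul_powMap hd, h1, one_mul]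

lemma toricMap_classPart {e : ℕ} {f : MvPolynomial σ R} (hf : f.IsHomogeneous e)
    (c : (i : σ) → ZMod (d i)) :
    toricMap R d (classPart R d c f) =
      Polynomial.monomial (e - (residueRep d c).degree)
        (∑ m ∈ f.support with residue d m = c, coeff m f) := by
  rw [classPart_apply, map_sum, map_sum]
  refine Finset.sum_congr rfl fun m hm => ?_
  obtain ⟨hmf, rfl⟩ := Finset.mem_filter.mp hm
  have hdeg : m.degree = e := by
    rw [Finsupp.degree_eq_weight_one]
    exact hf (mem_support_iff.mp hmf)
  have hsplit := congrArg Finsupp.degree (residueRep_residue_add_expMul_divExp d m)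
  rw [map_add] at hsplit
  rw [toricMap_monomial, ← degree_expMul]
  congr 2
  omega

lemma comap_powMap_map_powMap (hd : ∀ i, 0 < d i) (J : Ideal (MvPolynomial σ R)) :
    (J.map (powMap R d)).comap (powMap R d) = J := by
  -- `classPart R d 0` is a retraction of `powMap R d` that is linear over its image.
  refine le_antisymm (fun p hp => ?_) Ideal.le_comap_map
  obtain ⟨r, a, j, hsum⟩ := Submodule.mem_span_set'.mp (Ideal.mem_comap.mp hp)
  rw [← classPart_zero_powMap hd p, ← hsum, map_sum]
  refine Ideal.sum_mem _ fun k _ => ?_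
  obtain ⟨g, hg, hgj⟩ := (j k).2
  rw [smul_eq_mul, ← hgj, classPart_mul_powMap hd]
  exact Ideal.mul_mem_left _ _ hg

end ClassPart

section Characters

variable {K : Type*} [Field K]

variable (K) in
noncomputable def torusChar (v d : σ → ℕ) (c : (i : σ) → ZMod (d i)) : (σ → Kˣ) →* K where
  toFun x := ∏ i, (x i : K) ^ (v i * (c i).val)
  map_one' := by simp
  map_mul' x y := by simp only [Pi.mul_apply, Units.val_mul, mul_pow, Finset.prod_mul_distrib]

variable {v d : σ → ℕ} {β : Kˣ} (hβ : ∀ x : Kˣ, x ∈ Subgroup.zpowers β)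
  (hd : ∀ i, d i = orderOf (β ^ v i))
include hβ hd

lemma prod_pow_eq_torusChar_residue (m : σ →₀ ℕ) (x : σ → Kˣ) :
    ∏ i, ((x i : K) ^ v i) ^ m i = torusChar K v d (residue d m) x := by
  refine Finset.prod_congr rfl fun i _ => ?_
  have hroot : (x i ^ v i) ^ d i = 1 := hd i ▸ pow_pow_orderOf_pow_eq_one (hβ (x i)) (v i)
  rw [residue, ZMod.val_natCast, pow_mul, ← Units.val_pow_eq_pow_val,
    ← Units.val_pow_eq_pow_val, ← Units.val_pow_eq_pow_val, ← pow_eq_pow_mod _ hroot]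

variable [Finite K]

omit hβ in
lemma torusChar_injective : Function.Injective (torusChar K v d) := by
  classical
  intro c c' hcc
  funext i
  have hdi : NeZero (d i) := ⟨hd i ▸ (orderOf_pos _).ne'⟩
  have hval (c₀ : (i : σ) → ZMod (d i)) :
      torusChar K v d c₀ (Pi.mulSingle i β) = ((β ^ v i) ^ (c₀ i).val : Kˣ) := by
    rw [torusChar, MonoidHom.coe_mk, OneHom.coe_mk, Finset.prod_eq_single i (by simp_all)
      (by simp), Pi.mulSingle_eq_same, pow_mul, Units.val_pow_eq_pow_val, Units.val_pow_eq_pow_val]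
  have h := DFunLike.congr_fun hcc (Pi.mulSingle i β)
  rw [hval, hval, Units.val_inj, pow_eq_pow_iff_modEq, ← hd i] at h
  exact ZMod.val_injective _ (h.eq_of_lt_of_lt (ZMod.val_lt _) (ZMod.val_lt _))

lemma sum_coeff_residue_eq_zero {f : MvPolynomial σ K} (hf : f ∈ torusVanishingIdeal K v)
    (c : (i : σ) → ZMod (d i)) : ∑ m ∈ f.support with residue d m = c, coeff m f = 0 := by
  set s := fun c => ∑ m ∈ f.support with residue d m = c, coeff m f
  have hchar : ∀ x, ∑ c ∈ f.support.image (residue d), s c • torusChar K v d c x = 0 := by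
    intro x
    rw [← mem_torusVanishingIdeal.mp hf x, eval_eq',
      ← Finset.sum_fiberwise_of_maps_to fun m hm => Finset.mem_image_of_mem (residue d) hm]
    refine Finset.sum_congr rfl fun c _ => ?_
    rw [smul_eq_mul, Finset.sum_mul]
    refine Finset.sum_congr rfl fun m hm => ?_
    rw [prod_pow_eq_torusChar_residue hβ hd, (Finset.mem_filter.mp hm).2]
  by_cases hc : c ∈ f.support.image (residue d)
  · refine linearIndependent_iff'.mp
      ((linearIndependent_monoidHom (σ → Kˣ) K).comp _ (torusChar_injective hd)) _ s ?_ c hc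
    funext x
    simpa [Finset.sum_apply] using hchar x
  · refine Finset.sum_eq_zero fun m hm => absurd ?_ hc
    obtain ⟨hmf, rfl⟩ := Finset.mem_filter.mp hm
    exact Finset.mem_image_of_mem _ hmf

lemma classPart_mem_ker_toricMap {f : MvPolynomial σ K} {e : ℕ}
    (hf : f ∈ torusVanishingIdeal K v) (hhom : f.IsHomogeneous e) (c : (i : σ) → ZMod (d i)) :
    classPart K d c f ∈ RingHom.ker (toricMap K d) := by
  rw [RingHom.mem_ker, toricMap_classPart hhom, sum_coeff_residue_eq_zero hβ hd hf, map_zero]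

end Characters

section ToricIdeal

variable {d : σ → ℕ}

lemma toricMap_weightedHomogeneousComponent (s : ℕ) (g : MvPolynomial σ R) :
    toricMap R d (weightedHomogeneousComponent d s g) =
      Polynomial.monomial s ((toricMap R d g).coeff s) := by
  induction g using MvPolynomial.induction_on' with
  | add g₁ g₂ h₁ h₂ => simp only [map_add, h₁, h₂, Polynomial.coeff_add]
  | monomial m a =>
    have hm := isWeightedHomogeneous_monomial d m a rfl
    by_cases hs : Finsupp.weight d m = s
    · rw [← hs, hm.weightedHomogeneousComponent_same, toricMap_monomial,
        Polynomial.coeff_monomial_same]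
    · rw [hm.weightedHomogeneousComponent_ne _ (Ne.symm hs), toricMap_monomial,
        Polynomial.coeff_monomial_of_ne _ (Ne.symm hs), map_zero, map_zero]

lemma weightedHomogeneousComponent_mem_ker_toricMap {g : MvPolynomial σ R}
    (hg : g ∈ RingHom.ker (toricMap R d)) (s : ℕ) :
    weightedHomogeneousComponent d s g ∈ RingHom.ker (toricMap R d) := by
  rw [RingHom.mem_ker] at hg ⊢
  rw [toricMap_weightedHomogeneousComponent, hg, Polynomial.coeff_zero, map_zero]

lemma map_powMap_eq_span_image_homogeneous :
    (RingHom.ker (toricMap R d)).map (powMap R d) =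
      Ideal.span (powMap R d ''
        {g | g ∈ RingHom.ker (toricMap R d) ∧ ∃ s, IsWeightedHomogeneous d g s}) := by
  refine le_antisymm (Ideal.map_le_iff_le_comap.mpr fun g hg => ?_)
    (Ideal.span_le.mpr (Set.image_subset_iff.mpr fun g hg => Ideal.mem_map_of_mem _ hg.1))
  rw [Ideal.mem_comap, ← sum_weightedHomogeneousComponent_image d g, map_sum]
  exact Ideal.sum_mem _ fun s _ => Ideal.subset_span ⟨_,
    ⟨weightedHomogeneousComponent_mem_ker_toricMap hg s,
      s, weightedHomogeneousComponent_isWeightedHomogeneous s g⟩, rfl⟩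

end ToricIdeal

section ResidueGrading

variable [DecidableEq σ] {d : σ → ℕ}

variable (d) in
def residueDegWeight (i : σ) : ((i : σ) → ZMod (d i)) × ℕ := (Pi.single i 1, 1)

attribute [local instance] weightedGradedAlgebra

lemma weight_residueDegWeight (m : σ →₀ ℕ) :
    Finsupp.weight (residueDegWeight d) m = (residue d m, m.degree) := by
  ext i
  · simp only [Finsupp.weight_eq_sum, residueDegWeight, Prod.fst_sum, Prod.smul_fst,
      Finset.sum_apply, Pi.smul_apply]
    rw [Finset.sum_eq_single i (fun j _ hj => by rw [Pi.single_eq_of_ne hj.symm, smul_zero])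
      (by simp), Pi.single_eq_same, nsmul_one]
    rfl
  · simp [Finsupp.weight_eq_sum, residueDegWeight, Prod.snd_sum, Finsupp.degree_eq_sum]

lemma isHomogeneous_of_isWeightedHomogeneous_residueDegWeight {f : MvPolynomial σ R}
    {γ : ((i : σ) → ZMod (d i)) × ℕ} (hf : IsWeightedHomogeneous (residueDegWeight d) f γ) :
    f.IsHomogeneous γ.2 := by
  intro m hm
  rw [← hf hm, weight_residueDegWeight, Finsupp.degree_eq_weight_one]
  rfl

lemma isWeightedHomogeneous_powMap {g : MvPolynomial σ R} {s : ℕ}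
    (hg : IsWeightedHomogeneous d g s) :
    IsWeightedHomogeneous (residueDegWeight d) (powMap R d g) (0, s) := by
  rw [← g.support_sum_monomial_coeff, map_sum]
  refine IsWeightedHomogeneous.sum _ _ _ fun m hm => ?_
  rw [powMap_monomial]
  refine isWeightedHomogeneous_monomial _ _ _ ?_
  rw [weight_residueDegWeight, residue_expMul, degree_expMul, hg (mem_support_iff.mp hm)]

lemma isHomogeneous_map_powMap_ker_toricMap :
    ((RingHom.ker (toricMap R d)).map (powMap R d)).IsHomogeneous
      (weightedHomogeneousSubmodule R (residueDegWeight d)) := by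
  rw [map_powMap_eq_span_image_homogeneous]
  refine Ideal.homogeneous_span _ _ ?_
  rintro - ⟨g, ⟨-, s, hs⟩, rfl⟩
  exact ⟨(0, s), isWeightedHomogeneous_powMap hs⟩

variable {K : Type*} [Field K] [Finite K] {v : σ → ℕ} {β : Kˣ}
  (hβ : ∀ x : Kˣ, x ∈ Subgroup.zpowers β) (hd : ∀ i, d i = orderOf (β ^ v i))
include hβ hd

lemma span_homogeneous_torusVanishingIdeal :
    Ideal.span {f | (∃ e, f.IsHomogeneous e) ∧ f ∈ torusVanishingIdeal K v} =
      (RingHom.ker (toricMap K d)).map (powMap K d) := by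
  refine le_antisymm (Ideal.span_le.mpr ?_) ?_
  · rintro f ⟨⟨e, hhom⟩, hf⟩
    rw [SetLike.mem_coe, ← sum_monomial_residueRep_mul_powMap_classPart (d := d) f]
    exact Ideal.sum_mem _ fun c _ => Ideal.mul_mem_left _ _
      (Ideal.mem_map_of_mem _ (classPart_mem_ker_toricMap hβ hd hf hhom c))
  · rw [map_powMap_eq_span_image_homogeneous]
    refine Ideal.span_mono ?_
    rintro - ⟨g, ⟨hg, s, hs⟩, rfl⟩
    exact ⟨⟨s, isHomogeneous_of_isWeightedHomogeneous_residueDegWeight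
      (isWeightedHomogeneous_powMap hs)⟩, powMap_mem_torusVanishingIdeal hβ hd hg⟩

lemma exists_eq_monomial_mul_powMap {x : MvPolynomial σ K} {γ : ((i : σ) → ZMod (d i)) × ℕ}
    (hx : x ∈ torusVanishingIdeal K v) (hγ : IsWeightedHomogeneous (residueDegWeight d) x γ) :
    ∃ g ∈ RingHom.ker (toricMap K d), x = monomial (residueRep d γ.1) 1 * powMap K d g := by
  refine ⟨classPart K d γ.1 x, classPart_mem_ker_toricMap hβ hd hx
    (isHomogeneous_of_isWeightedHomogeneous_residueDegWeight hγ) γ.1, ?_⟩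
  have hres : ∀ m ∈ x.support, residue d m = γ.1 := fun m hm => by
    rw [← hγ (mem_support_iff.mp hm), weight_residueDegWeight]
  rw [monomial_residueRep_mul_powMap_classPart, Finset.filter_true_of_mem hres,
    support_sum_monomial_coeff]

end ResidueGrading

lemma le_span_of_map_powMap_le {d : σ → ℕ} (hd : ∀ i, 0 < d i) {J : Ideal (MvPolynomial σ R)}
    {ι : Type*} {c : ι → σ →₀ ℕ} {g : ι → MvPolynomial σ R}
    (hJ : J.map (powMap R d) ≤
      Ideal.span (Set.range fun j => monomial (c j) 1 * powMap R d (g j))) :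
    J ≤ Ideal.span (Set.range g) := by
  have hspan : Ideal.span (Set.range fun j => monomial (c j) 1 * powMap R d (g j)) ≤
      (Ideal.span (Set.range g)).map (powMap R d) :=
    Ideal.span_le.mpr fun _ ⟨j, hj⟩ => hj ▸
      Ideal.mul_mem_left _ _ (Ideal.mem_map_of_mem _ (Ideal.subset_span ⟨j, rfl⟩))
  calc J = (J.map (powMap R d)).comap (powMap R d) := (comap_powMap_map_powMap hd J).symm
    _ ≤ ((Ideal.span (Set.range g)).map (powMap R d)).comap (powMap R d) :=
      Ideal.comap_mono (hJ.trans hspan)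
    _ = Ideal.span (Set.range g) := comap_powMap_map_powMap hd _

end DegenerateTorus

open DegenerateTorus in
theorem vanishing_ideal_ci_iff_toric_ci_general
    (K : Type) [Field K] [Fintype K] (n : ℕ)
    (v : Fin n → ℕ)
    (β : Kˣ) (hβ : ∀ x : Kˣ, x ∈ Subgroup.zpowers β)
    (d : Fin n → ℕ) (hd : ∀ i, d i = orderOf (β ^ v i))
    (IX : Ideal (MvPolynomial (Fin n) K))
    (hIX : IX = Ideal.span {f : MvPolynomial (Fin n) K |
      (∃ e, f.IsHomogeneous e) ∧
      ∀ x : Fin n → Kˣ, eval (fun i => (x i : K) ^ v i) f = 0})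
    (P : Ideal (MvPolynomial (Fin n) K))
    (hP : P = RingHom.ker (aeval (fun i : Fin n => (Polynomial.X : Polynomial K) ^ d i) :
      MvPolynomial (Fin n) K →ₐ[K] Polynomial K)) :
    (∃ h : Fin (n - 1) → MvPolynomial (Fin n) K, IX = Ideal.span (Set.range h)) ↔
    (∃ g : Fin (n - 1) → MvPolynomial (Fin n) K, P = Ideal.span (Set.range g)) := by
  have hd0 : ∀ i, 0 < d i := fun i => hd i ▸ orderOf_pos _
  change P = RingHom.ker (toricMap K d) at hP
  simp_rw [← mem_torusVanishingIdeal] at hIX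
  rw [span_homogeneous_torusVanishingIdeal hβ hd, ← hP] at hIX
  subst hIX hP
  constructor
  · rintro ⟨h, hIXh⟩
    obtain ⟨F, hFhom, hIXF⟩ := exists_isWeightedHomogeneous_span_range_eq (deg := .snd _ _)
      (fun _ => Nat.one_pos) isHomogeneous_map_powMap_ker_toricMap h hIXh
    choose γ hγ using hFhom
    choose g hgP hFg using fun j => exists_eq_monomial_mul_powMap hβ hd
      (map_powMap_le_torusVanishingIdeal hβ hd (hIXF ▸ Ideal.subset_span ⟨j, rfl⟩)) (hγ j)
    rw [funext hFg] at hIXF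
    refine ⟨g, le_antisymm (le_span_of_map_powMap_le hd0 hIXF.le) (Ideal.span_le.mpr ?_)⟩
    rintro - ⟨j, rfl⟩
    exact hgP j
  · rintro ⟨g, hPg⟩
    exact ⟨fun k => powMap K d (g k), by rw [hPg, Ideal.map_span, ← Set.range_comp]; rfl⟩

/-- **Corollary.** With `K = 𝔽_q`, `β` a generator of `Kˣ`, `d i = orderOf (β ^ v i)`,
`IX` the vanishing ideal of the degenerate projective torus parameterized by `x_i ^ v_i`
and `P` the toric ideal (kernel of `t_i ↦ y ^ d i`), the ideal `IX` is a complete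
intersection (generated by `n - 1 = ht IX` elements) if and only if `P` is a complete
intersection (generated by `n - 1 = ht P` elements). -/
theorem vanishing_ideal_ci_iff_toric_ci
    (K : Type) [Field K] [Fintype K] (n : ℕ) (hn : 2 ≤ n)
    (v : Fin n → ℕ) (hv : ∀ i, 0 < v i)
    (β : Kˣ) (hβ : ∀ x : Kˣ, x ∈ Subgroup.zpowers β)
    (d : Fin n → ℕ) (hd : ∀ i, d i = orderOf (β ^ v i))
    (IX : Ideal (MvPolynomial (Fin n) K))
    (hIX : IX = Ideal.span {f : MvPolynomial (Fin n) K |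
      (∃ e, f.IsHomogeneous e) ∧
      ∀ x : Fin n → Kˣ, eval (fun i => (x i : K) ^ v i) f = 0})
    (P : Ideal (MvPolynomial (Fin n) K))
    (hP : P = RingHom.ker (aeval (fun i : Fin n => (Polynomial.X : Polynomial K) ^ d i) :
      MvPolynomial (Fin n) K →ₐ[K] Polynomial K)) :
    (∃ h : Fin (n - 1) → MvPolynomial (Fin n) K, IX = Ideal.span (Set.range h)) ↔
    (∃ g : Fin (n - 1) → MvPolynomial (Fin n) K, P = Ideal.span (Set.range g)) :=
  vanishing_ideal_ci_iff_toric_ci_general K n v β hβ d hd IX hIX P hP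
end

section
/- Set r = gcd(d_1, …, d_n), d_i′ = o(β^{r v_i}) for i = 1, …, n, and let 𝒮′ = ℕd_1′ + ⋯ + ℕd_n′ (a numerical semigroup, since gcd(d_1′, …, d_n′) = 1). If the vanishing ideal I(X) is a complete intersection, then the index of regularity satisfies reg(S/I(X)) = r · g(𝒮′) + (d_1 + ⋯ + d_n) − (n − 1), where g(𝒮′) is the Frobenius number of 𝒮′. -/
open MvPolynomial Finset

/-!
Evaluating the monomial `t^a` at the points `(x_i ^ v_i)` of the degenerate torus gives the
character `x ↦ ∏ x_i ^ (v_i a_i)` of `(Kˣ)ⁿ`, and two such characters coincide iff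
`a ≡ a'` componentwise modulo `d`. Distinct characters are linearly independent (Dedekind), so
`H m` counts the residue vectors `b` (`b_i < d_i`) with `m ∈ ∑ b_i + ℕ d_1 + ⋯ + ℕ d_n`.
Since `d_i = r d'_i`, every such `b` has `r ∣ m - ∑ b_i`; conversely such a `b` occurs as soon as
`(m - ∑ b_i) / r` exceeds the Frobenius number `F`, which holds for all `b` once
`m > m₀ = r F + ∑ (d_i - 1)`. From there on `H` agrees with an `r`-periodic count, so the Hilbert
polynomial is that (constant) count, while at `m₀` the residue vector `(d_i - 1)` is missing.
Hence the regularity index is `m₀ + 1`.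
-/

theorem orderOf_eq_mul_orderOf_pow {G : Type*} [Monoid G] {x : G} {r : ℕ} (hr : r ≠ 0)
    (h : r ∣ orderOf x) : orderOf x = r * orderOf (x ^ r) := by
  rw [orderOf_pow_of_dvd hr h, Nat.mul_div_cancel' h]

section VanishingIdeal

variable {σ K Y : Type*} [Field K]

noncomputable def homogeneousVanishingIdeal (P : Y → σ → K) : Ideal (MvPolynomial σ K) :=
  Ideal.span {g | (∃ e, g.IsHomogeneous e) ∧ ∀ y, eval (P y) g = 0}

noncomputable def hilbertFunction (I : Ideal (MvPolynomial σ K)) (m : ℕ) : ℕ :=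
  Module.finrank K ((homogeneousSubmodule σ K m) ⧸
    Submodule.comap (homogeneousSubmodule σ K m).subtype (Submodule.restrictScalars K I))

variable (P : Y → σ → K)

theorem mem_homogeneousVanishingIdeal_iff {f : MvPolynomial σ K} {m : ℕ}
    (hf : f.IsHomogeneous m) : f ∈ homogeneousVanishingIdeal P ↔ ∀ y, eval (P y) f = 0 := by
  refine ⟨fun h y => ?_, fun h => Ideal.subset_span ⟨⟨m, hf⟩, h⟩⟩
  suffices homogeneousVanishingIdeal P ≤ RingHom.ker (eval (P y)) from this h
  exact Ideal.span_le.mpr fun g hg => hg.2 y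

noncomputable def evalAt : MvPolynomial σ K →ₗ[K] (Y → K) :=
  LinearMap.pi fun y => (aeval (P y)).toLinearMap

@[simp]
theorem evalAt_apply (f : MvPolynomial σ K) (y : Y) : evalAt P f y = eval (P y) f := by
  simp [evalAt]

theorem hilbertFunction_homogeneousVanishingIdeal (m : ℕ) :
    hilbertFunction (homogeneousVanishingIdeal P) m = Module.finrank K (Submodule.span K
      ((fun a y => eval (P y) (monomial a 1)) '' {a : σ →₀ ℕ | a.degree = m})) := by
  have hker : Submodule.comap (homogeneousSubmodule σ K m).subtype
      (Submodule.restrictScalars K (homogeneousVanishingIdeal P)) =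
      LinearMap.ker (evalAt P ∘ₗ (homogeneousSubmodule σ K m).subtype) := by
    ext ⟨f, hf⟩
    simp [mem_homogeneousVanishingIdeal_iff P hf, funext_iff]
  rw [hilbertFunction, (Submodule.quotEquivOfEq _ _ hker).trans (LinearMap.quotKerEquivRange _)
    |>.finrank_eq, LinearMap.range_comp, Submodule.range_subtype,
    homogeneousSubmodule_eq_finsupp_supported, AddMonoidAlgebra.supported_eq_span_single,
    Submodule.map_span, Set.image_image]
  rfl

end VanishingIdeal

section MonomialCharacter

variable {σ : Type*} [Fintype σ] (K : Type*)

noncomputable def monomialChar [CommMonoid K] (e : σ → ℕ) : (σ → Kˣ) →* K where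
  toFun x := ∏ i, (x i : K) ^ e i
  map_one' := by simp
  map_mul' x y := by simp [mul_pow, prod_mul_distrib]

variable {K}

@[simp]
theorem monomialChar_apply [CommMonoid K] (e : σ → ℕ) (x : σ → Kˣ) :
    monomialChar K e x = ∏ i, (x i : K) ^ e i := rfl

theorem monomialChar_eq_iff [CommMonoid K] {β : Kˣ} (hβ : ∀ x : Kˣ, x ∈ Subgroup.zpowers β)
    (e e' : σ → ℕ) : monomialChar K e = monomialChar K e' ↔ ∀ i, β ^ e i = β ^ e' i := by
  classical
  refine ⟨fun h i => Units.ext ?_, fun h => MonoidHom.ext fun x => ?_⟩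
  · simpa [Pi.mulSingle_apply, apply_ite] using DFunLike.congr_fun h (Pi.mulSingle i β)
  · refine prod_congr rfl fun i _ => ?_
    obtain ⟨k, hk⟩ := Subgroup.mem_zpowers_iff.mp (hβ (x i))
    have hpow (c : ℕ) : (x i ^ c : Kˣ) = (β ^ c) ^ k := by
      rw [← hk, ← zpow_natCast, zpow_comm, zpow_natCast]
    simp only [← Units.val_pow_eq_pow_val, hpow, h i]

theorem eval_monomial_pow_eq_monomialChar [CommRing K] (v : σ → ℕ) (a : σ →₀ ℕ) (x : σ → Kˣ) :
    eval (fun i => (x i : K) ^ v i) (monomial a 1) = monomialChar K (v * ⇑a) x := by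
  simp [eval_monomial, Finsupp.prod_fintype, ← pow_mul]

end MonomialCharacter

theorem sum_mul_eq_mul_sum_mul {ι : Type*} [Fintype ι] {r : ℕ} {d d' : ι → ℕ}
    (hrd : ∀ i, d i = r * d' i) (c : ι → ℕ) :
    ∑ i, (c i : ℤ) * d i = r * ∑ i, (c i : ℤ) * d' i := by
  rw [mul_sum]
  refine sum_congr rfl fun i _ => ?_
  rw [hrd]
  push_cast
  ring

section Residues

variable {ι : Type*} [Fintype ι] [DecidableEq ι]

def residueBox (d : ι → ℕ) : Finset (ι → ℕ) := Fintype.piFinset fun i => range (d i)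

theorem mem_residueBox {d b : ι → ℕ} : b ∈ residueBox d ↔ ∀ i, b i < d i := by
  simp [residueBox]

open Classical in
noncomputable def residuesOfDegree (d : ι → ℕ) (m : ℕ) : Finset (ι → ℕ) :=
  (residueBox d).filter fun b => ∃ c : ι → ℕ, m = ∑ i, (b i + c i * d i)

theorem mem_residuesOfDegree {d b : ι → ℕ} {m : ℕ} :
    b ∈ residuesOfDegree d m ↔ b ∈ residueBox d ∧ ∃ c : ι → ℕ, m = ∑ i, (b i + c i * d i) := by
  classical
  exact mem_filter

theorem residuesOfDegree_subset_residueBox {d : ι → ℕ} {m : ℕ} :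
    residuesOfDegree d m ⊆ residueBox d := by
  classical
  exact filter_subset _ _

theorem image_mod_eq_residuesOfDegree {d : ι → ℕ} (hd : ∀ i, 0 < d i) (m : ℕ) :
    (fun (a : ι →₀ ℕ) i => a i % d i) '' {a | a.degree = m} = residuesOfDegree d m := by
  ext b
  simp only [residuesOfDegree, Set.mem_image, Set.mem_ofPred_eq, coe_filter, mem_residueBox,
    Finsupp.degree_eq_sum]
  constructor
  · rintro ⟨a, rfl, rfl⟩
    exact ⟨fun i => Nat.mod_lt _ (hd i), fun i => a i / d i,
      sum_congr rfl fun i _ => (Nat.mod_add_div' (a i) (d i)).symm⟩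
  · rintro ⟨hb, c, rfl⟩
    refine ⟨Finsupp.equivFunOnFinite.symm fun i => b i + c i * d i, by simp, ?_⟩
    ext i
    simp [Nat.mod_eq_of_lt (hb i)]

def congruentResidues (r : ℕ) (d : ι → ℕ) (m : ℕ) : Finset (ι → ℕ) :=
  (residueBox d).filter fun b => (r : ℤ) ∣ m - ∑ i, (b i : ℤ)

variable {r : ℕ} {d d' : ι → ℕ} {m : ℕ}

theorem congruentResidues_add_self (r : ℕ) (d : ι → ℕ) (m : ℕ) :
    congruentResidues r d (m + r) = congruentResidues r d m := by
  refine filter_congr fun b _ => ?_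
  rw [Nat.cast_add, add_sub_right_comm, dvd_add_left (dvd_refl _)]

theorem sum_le_of_mem_residueBox {b : ι → ℕ} (hb : b ∈ residueBox d) :
    ∑ i, (b i : ℤ) ≤ ∑ i, ((d i : ℤ) - 1) :=
  sum_le_sum fun i _ => by have := mem_residueBox.mp hb i; omega

theorem residuesOfDegree_subset_congruentResidues (hrd : ∀ i, d i = r * d' i) :
    residuesOfDegree d m ⊆ congruentResidues r d m := by
  intro b hb
  obtain ⟨hbox, c, rfl⟩ := mem_residuesOfDegree.mp hb
  refine mem_filter.mpr ⟨hbox, ∑ i, (c i : ℤ) * d' i, ?_⟩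
  push_cast
  rw [sum_add_distrib, add_sub_cancel_left, sum_mul_eq_mul_sum_mul hrd]

theorem congruentResidues_subset_residuesOfDegree (hrd : ∀ i, d i = r * d' i) {F : ℤ}
    (hF : ∀ s, F < s → ∃ c : ι → ℕ, s = ∑ i, (c i : ℤ) * d' i)
    (hm : r * F + ∑ i, ((d i : ℤ) - 1) < m) :
    congruentResidues r d m ⊆ residuesOfDegree d m := by
  intro b hb
  obtain ⟨hbox, s, hs⟩ := mem_filter.mp hb
  have hFs : F < s := lt_of_mul_lt_mul_left (a := (r : ℤ)) (by
    linarith [sum_le_of_mem_residueBox hbox]) (by positivity)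
  obtain ⟨c, rfl⟩ := hF s hFs
  refine mem_residuesOfDegree.mpr ⟨hbox, c, ?_⟩
  zify
  rw [sum_add_distrib, sum_mul_eq_mul_sum_mul hrd, ← hs]
  ring

theorem residuesOfDegree_ssubset_congruentResidues (hd : ∀ i, 0 < d i) (hr : 0 < r)
    (hrd : ∀ i, d i = r * d' i) {F : ℤ} (hF : ¬∃ c : ι → ℕ, F = ∑ i, (c i : ℤ) * d' i)
    (hm : (m : ℤ) = r * F + ∑ i, ((d i : ℤ) - 1)) :
    residuesOfDegree d m ⊂ congruentResidues r d m := by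
  have htop : (fun i => d i - 1) ∈ residueBox d := mem_residueBox.mpr fun i => by
    have := hd i; omega
  have hcast : ∑ i, ((d i - 1 : ℕ) : ℤ) = ∑ i, ((d i : ℤ) - 1) :=
    sum_congr rfl fun i _ => by have := hd i; omega
  refine (ssubset_iff_of_subset (residuesOfDegree_subset_congruentResidues hrd)).mpr
    ⟨fun i => d i - 1, mem_filter.mpr ⟨htop, F, by rw [hcast, hm]; ring⟩, fun h => ?_⟩
  obtain ⟨-, c, hc⟩ := mem_residuesOfDegree.mp h
  refine hF ⟨c, mul_left_cancel₀ (a := (r : ℤ)) (by positivity) ?_⟩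
  zify at hc
  rw [sum_add_distrib, sum_mul_eq_mul_sum_mul hrd, hcast, hm] at hc
  linarith

end Residues

section TorusHilbertFunction

variable {ι K : Type*} [Fintype ι] [Field K]
  {β : Kˣ} (hβ : ∀ x : Kˣ, x ∈ Subgroup.zpowers β) {v d : ι → ℕ}
  (hd : ∀ i, d i = orderOf (β ^ v i))
include hβ hd

theorem monomialChar_mul_eq_iff (a a' : ι → ℕ) :
    monomialChar K (v * a) = monomialChar K (v * a') ↔ ∀ i, a i ≡ a' i [MOD d i] := by
  simp only [monomialChar_eq_iff hβ, Pi.mul_apply, pow_mul, pow_eq_pow_iff_modEq, hd]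

theorem hilbertFunction_torus_eq_card_residuesOfDegree [DecidableEq ι] [Finite K] (m : ℕ) :
    hilbertFunction (homogeneousVanishingIdeal fun (x : ι → Kˣ) i => (x i : K) ^ v i) m =
      (residuesOfDegree d m).card := by
  have hdpos (i : ι) : 0 < d i := hd i ▸ orderOf_pos _
  let χ (b : ι → ℕ) : (ι → Kˣ) → K := monomialChar K (v * b)
  have hχ : (fun a x => eval (fun i => (x i : K) ^ v i) (monomial a 1)) '' {a | a.degree = m} =
      Set.range fun b : residuesOfDegree d m => χ b := calc
    _ = χ '' ((fun (a : ι →₀ ℕ) i => a i % d i) '' {a | a.degree = m}) := by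
      rw [Set.image_image]
      refine Set.image_congr fun a _ => funext fun x => ?_
      rw [eval_monomial_pow_eq_monomialChar, (monomialChar_mul_eq_iff hβ hd _ _).mpr
        fun i => (Nat.mod_modEq _ _).symm]
    _ = _ := by
      rw [image_mod_eq_residuesOfDegree hdpos, Set.image_eq_range]
      rfl
  have hinj : Function.Injective fun b : residuesOfDegree d m => monomialChar K (v * b.1) := by
    intro b b' h
    have hb := mem_residueBox.mp (residuesOfDegree_subset_residueBox b.2)
    have hb' := mem_residueBox.mp (residuesOfDegree_subset_residueBox b'.2)
    exact Subtype.ext <| funext fun i =>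
      Nat.ModEq.eq_of_lt_of_lt ((monomialChar_mul_eq_iff hβ hd _ _).mp h i) (hb i) (hb' i)
  rw [hilbertFunction_homogeneousVanishingIdeal, hχ]
  exact (finrank_span_eq_card ((linearIndependent_monoidHom _ K).comp _ hinj)).trans
    (Fintype.card_coe _)

end TorusHilbertFunction

section HilbertPolynomial

variable {H C : ℕ → ℕ} {p : Polynomial ℚ}

theorem cast_eq_eval_of_periodic {r : ℕ} (hr : 0 < r) (hC : Function.Periodic C r)
    (hp : ∃ N, ∀ m, N ≤ m → (C m : ℚ) = p.eval (m : ℚ)) : ∀ m, (C m : ℚ) = p.eval (m : ℚ) := by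
  obtain ⟨N, hN⟩ := hp
  have hCk (k m : ℕ) : C (m + k * r) = C m := by simpa using hC.nat_mul k m
  have hpC : p = Polynomial.C (C N : ℚ) := by
    refine Polynomial.eq_of_infinite_eval_eq _ _ (Set.infinite_of_injective_forall_mem
      (f := fun k : ℕ => ((N + k * r : ℕ) : ℚ)) (fun k k' h => ?_) fun k => ?_)
    · simpa [hr.ne'] using h
    · simp only [Set.mem_ofPred_eq, Polynomial.eval_C]
      rw [← hN _ (Nat.le_add_right _ _), hCk]
  intro m
  rw [← hCk N m, hN _ (by nlinarith), hpC, Polynomial.eval_C, Polynomial.eval_C]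

theorem isLeast_of_eq_from_of_ne_pred {L : ℕ} (hC : ∀ m, (C m : ℚ) = p.eval (m : ℚ))
    (heq : ∀ m, L ≤ m → H m = C m) (hne : ∀ m, m + 1 = L → H m ≠ C m) :
    IsLeast {l : ℕ | ∀ m, l ≤ m → (H m : ℚ) = p.eval (m : ℚ)} L := by
  refine ⟨fun m hm => by rw [heq m hm, hC], fun l hl => ?_⟩
  by_contra! hlL
  exact hne (L - 1) (by omega) (by exact_mod_cast (hl (L - 1) (by omega)).trans (hC _).symm)

end HilbertPolynomial

section Regularity

variable {ι : Type*} [Fintype ι] {r : ℕ} {d d' : ι → ℕ} {F : ℤ}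

theorem neg_one_le_of_isGreatest_not_representable
    (hF : IsGreatest {s : ℤ | ¬∃ c : ι → ℕ, s = ∑ i, (c i : ℤ) * d' i} F) : -1 ≤ F :=
  hF.2 fun ⟨c, hc⟩ => by
    linarith [sum_nonneg fun i (_ : i ∈ univ) => mul_nonneg (Int.natCast_nonneg (c i))
      (Int.natCast_nonneg (d' i))]

theorem exists_isLeast_card_residuesOfDegree_eq_eval [DecidableEq ι] [Nonempty ι]
    (hd : ∀ i, 0 < d i) (hrd : ∀ i, d i = r * d' i)
    (hF : IsGreatest {s : ℤ | ¬∃ c : ι → ℕ, s = ∑ i, (c i : ℤ) * d' i} F) {p : Polynomial ℚ}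
    (hp : ∃ N, ∀ m, N ≤ m → ((residuesOfDegree d m).card : ℚ) = p.eval (m : ℚ)) :
    ∃ L : ℕ, (L : ℤ) = r * F + ∑ i, ((d i : ℤ) - 1) + 1 ∧
      IsLeast {l : ℕ | ∀ m, l ≤ m → ((residuesOfDegree d m).card : ℚ) = p.eval (m : ℚ)} L := by
  obtain ⟨i₀⟩ := ‹Nonempty ι›
  have hr : 0 < r := Nat.pos_of_mul_pos_right (hrd i₀ ▸ hd i₀)
  set m₀ : ℤ := r * F + ∑ i, ((d i : ℤ) - 1)
  have hm₀ : -1 ≤ m₀ := by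
    have h₁ : (r : ℤ) * -1 ≤ r * F :=
      mul_le_mul_of_nonneg_left (neg_one_le_of_isGreatest_not_representable hF) (by positivity)
    have h₂ : (d i₀ : ℤ) - 1 ≤ ∑ i, ((d i : ℤ) - 1) :=
      single_le_sum (f := fun i => (d i : ℤ) - 1) (fun i _ => by have := hd i; omega)
        (mem_univ i₀)
    have h₃ : (r : ℤ) ≤ d i₀ := by exact_mod_cast Nat.le_of_dvd (hd i₀) ⟨_, hrd i₀⟩
    linarith
  have hRC (m : ℕ) (hm : m₀ < m) : residuesOfDegree d m = congruentResidues r d m :=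
    (residuesOfDegree_subset_congruentResidues hrd).antisymm
      (congruentResidues_subset_residuesOfDegree hrd
        (fun s hs => not_not.mp fun h => (hF.2 h).not_gt hs) hm)
  have hCp := cast_eq_eval_of_periodic hr (C := fun m => (congruentResidues r d m).card)
    (fun m => congrArg card (congruentResidues_add_self r d m)) (by
      obtain ⟨N, hN⟩ := hp
      refine ⟨max N (m₀ + 1).toNat, fun m hm => ?_⟩
      rw [← hN m (le_of_max_le_left hm), hRC m (by omega)])
  refine ⟨(m₀ + 1).toNat, Int.toNat_of_nonneg (by omega),
    isLeast_of_eq_from_of_ne_pred hCp (fun m hm => by rw [hRC m (by omega)]) fun m hm => ?_⟩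
  exact (card_lt_card (residuesOfDegree_ssubset_congruentResidues hd hr hrd hF.1
    (by omega))).ne

end Regularity

theorem regularity_of_ci_vanishing_ideal_general
    (K : Type) [Field K] [Fintype K] (n : ℕ) (hn : 2 ≤ n)
    (v : Fin n → ℕ)
    (β : Kˣ) (hβ : ∀ x : Kˣ, x ∈ Subgroup.zpowers β)
    (d : Fin n → ℕ) (hd : ∀ i, d i = orderOf (β ^ v i))
    (r : ℕ) (hr : r = Finset.univ.gcd d)
    (d' : Fin n → ℕ) (hd' : ∀ i, d' i = orderOf (β ^ (r * v i)))
    (IX : Ideal (MvPolynomial (Fin n) K))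
    (hIX : IX = Ideal.span {f : MvPolynomial (Fin n) K |
      (∃ e, f.IsHomogeneous e) ∧
      ∀ x : Fin n → Kˣ, eval (fun i => (x i : K) ^ v i) f = 0})
    (H : ℕ → ℕ)
    (hH : ∀ m, H m = Module.finrank K
      ((homogeneousSubmodule (Fin n) K m) ⧸
        Submodule.comap (homogeneousSubmodule (Fin n) K m).subtype
          (Submodule.restrictScalars K IX)))
    (p : Polynomial ℚ)
    (hp : ∃ N : ℕ, ∀ m : ℕ, N ≤ m → (H m : ℚ) = p.eval (m : ℚ))
    (ℓ : ℕ)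
    (hℓ : IsLeast {l : ℕ | ∀ m : ℕ, l ≤ m → (H m : ℚ) = p.eval (m : ℚ)} ℓ)
    (F : ℤ)
    (hF : IsGreatest {m : ℤ | ¬ ∃ c : Fin n → ℕ, m = ∑ i, (c i : ℤ) * (d' i : ℤ)} F) :
    (ℓ : ℤ) = r * F + (∑ i, (d i : ℤ)) - ((n : ℤ) - 1) := by
  have : NeZero n := ⟨by omega⟩
  have hdpos (i : Fin n) : 0 < d i := hd i ▸ orderOf_pos _
  have hrdvd (i : Fin n) : r ∣ d i := hr ▸ gcd_dvd (mem_univ i)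
  have hrpos : r ≠ 0 := ne_zero_of_dvd_ne_zero (hdpos 0).ne' (hrdvd 0)
  have hrd (i : Fin n) : d i = r * d' i := by
    rw [hd', pow_mul', hd]
    exact orderOf_eq_mul_orderOf_pow hrpos (hd i ▸ hrdvd i)
  have hHR : H = fun m => (residuesOfDegree d m).card :=
    funext fun m => (hH m).trans (hIX ▸ hilbertFunction_torus_eq_card_residuesOfDegree hβ hd m)
  subst hHR
  obtain ⟨L, hLz, hL⟩ := exists_isLeast_card_residuesOfDegree_eq_eval hdpos hrd hF hp
  rw [hℓ.unique hL, hLz, sum_sub_distrib, sum_const, card_univ, Fintype.card_fin, nsmul_one]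
  ring

/-- **Corollary (ii).** Let `K = 𝔽_q`, `β` a generator of `Kˣ`, `v i > 0`,
`d i = orderOf (β ^ v i)`, `r = gcd(d 1, …, d n)` and `d' i = orderOf (β ^ (r * v i))`.
Let `IX` be the vanishing ideal of the degenerate projective torus parameterized by
`x_i ^ v_i`.  Let `H` be the Hilbert function of `S/IX`, `p` its Hilbert polynomial and
`ℓ = reg (S/IX)` the index of regularity (the least `ℓ` with `H m = p m` for `m ≥ ℓ`).
Let `F` be the Frobenius number of the numerical semigroup `ℕ d'_1 + ⋯ + ℕ d'_n`, i.e.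
the greatest integer not of the form `∑ c i * d' i`.  If `IX` is a complete intersection,
then `reg (S/IX) = r * F + (d 1 + ⋯ + d n) - (n - 1)`. -/
theorem regularity_of_ci_vanishing_ideal
    (K : Type) [Field K] [Fintype K] (n : ℕ) (hn : 2 ≤ n)
    (v : Fin n → ℕ) (hv : ∀ i, 0 < v i)
    (β : Kˣ) (hβ : ∀ x : Kˣ, x ∈ Subgroup.zpowers β)
    (d : Fin n → ℕ) (hd : ∀ i, d i = orderOf (β ^ v i))
    (r : ℕ) (hr : r = Finset.univ.gcd d)
    (d' : Fin n → ℕ) (hd' : ∀ i, d' i = orderOf (β ^ (r * v i)))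
    (IX : Ideal (MvPolynomial (Fin n) K))
    (hIX : IX = Ideal.span {f : MvPolynomial (Fin n) K |
      (∃ e, f.IsHomogeneous e) ∧
      ∀ x : Fin n → Kˣ, eval (fun i => (x i : K) ^ v i) f = 0})
    (hCI : ∃ g : Fin (n - 1) → MvPolynomial (Fin n) K, IX = Ideal.span (Set.range g))
    (H : ℕ → ℕ)
    (hH : ∀ m, H m = Module.finrank K
      ((homogeneousSubmodule (Fin n) K m) ⧸
        Submodule.comap (homogeneousSubmodule (Fin n) K m).subtype
          (Submodule.restrictScalars K IX)))
    (p : Polynomial ℚ)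
    (hp : ∃ N : ℕ, ∀ m : ℕ, N ≤ m → (H m : ℚ) = p.eval (m : ℚ))
    (ℓ : ℕ)
    (hℓ : IsLeast {l : ℕ | ∀ m : ℕ, l ≤ m → (H m : ℚ) = p.eval (m : ℚ)} ℓ)
    (F : ℤ)
    (hF : IsGreatest {m : ℤ | ¬ ∃ c : Fin n → ℕ, m = ∑ i, (c i : ℤ) * (d' i : ℤ)} F) :
    (ℓ : ℤ) = r * F + (∑ i, (d i : ℤ)) - ((n : ℤ) - 1) :=
  regularity_of_ci_vanishing_ideal_general K n hn v β hβ d hd r hr d' hd' IX hIX H hH p hp ℓ hℓ F hF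
end

section
/- The toric ideal P equals the lattice ideal I(L₁) of the lattice L₁ = ker(ψ), and the vanishing ideal I(X) of the degenerate projective torus equals the lattice ideal I(L) of the lattice L = D(ker ψ). -/
/-!
Both ideals are kernels of maps sending each monomial to a member of a linearly independent
family: `t^m ↦ y^{⟨d, m⟩}` for `P`, and `t^m ↦ (x ↦ ∏ xᵢ^{vᵢ mᵢ})`, a character of the torus
`(Kˣ)ⁿ`, for `I(X)` (Dedekind's lemma). So a polynomial in the kernel has zero coefficient sum
over every class of monomials with the same image, and is therefore a combination of binomials
`t^m - t^{m'}` within one class; each of these is a monomial multiple of `t^{c⁺} - t^{c⁻}` for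
`c = m - m'`. Two monomials have the same image exactly when `m - m' ∈ ker ψ`, resp. (for
monomials of equal degree, as in a homogeneous polynomial) when `m - m' ∈ D (ker ψ)`, because
`x ↦ x^{vᵢ}` maps the cyclic group `Kˣ` onto the subgroup of order `dᵢ` generated by `β^{vᵢ}`.
-/

open MvPolynomial Finset

variable {R σ : Type*}

theorem prod_X_pow_eq_monomial_of_fintype [CommSemiring R] [Fintype σ] (m : σ →₀ ℕ) :
    ∏ i, (X i : MvPolynomial σ R) ^ m i = monomial m 1 := by
  rw [monomial_eq, C_1, one_mul, Finsupp.prod_fintype _ _ fun _ => pow_zero _]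

noncomputable def latticeIdeal (R : Type*) [CommRing R] [Fintype σ] (L : Submodule ℤ (σ → ℤ)) :
    Ideal (MvPolynomial σ R) :=
  Ideal.span {f | ∃ c ∈ L, f = (∏ i, X i ^ (c i).toNat) - ∏ i, X i ^ (-(c i)).toNat}

section latticeIdeal

variable [CommRing R] [Fintype σ] {L : Submodule ℤ (σ → ℤ)}

theorem monomial_sub_monomial_mem_latticeIdeal {m m' : σ →₀ ℕ}
    (h : (fun i => (m i : ℤ) - m' i) ∈ L) :
    monomial m (1 : R) - monomial m' 1 ∈ latticeIdeal R L := by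
  have hgen : monomial (m - m') (1 : R) - monomial (m' - m) 1 ∈ latticeIdeal R L := by
    refine Ideal.subset_span ⟨_, h, ?_⟩
    simp only [← prod_X_pow_eq_monomial_of_fintype, Finsupp.coe_tsub, Pi.sub_apply]
    congr 1 <;> exact prod_congr rfl fun i _ => by congr 1; omega
  have hsplit : monomial m (1 : R) - monomial m' 1 =
      monomial (m ⊓ m') 1 * (monomial (m - m') 1 - monomial (m' - m) 1) := by
    rw [mul_sub, monomial_mul, monomial_mul, one_mul]
    congr 3 <;> ext i <;> simp only [Finsupp.coe_add, Finsupp.coe_tsub, Finsupp.inf_apply,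
      Pi.add_apply, Pi.sub_apply] <;> omega
  exact hsplit ▸ Ideal.mul_mem_left _ _ hgen

theorem latticeIdeal_le_of_monomial_sub_monomial_mem {J : Ideal (MvPolynomial σ R)}
    (h : ∀ m m' : σ →₀ ℕ, (fun i => (m i : ℤ) - m' i) ∈ L → monomial m 1 - monomial m' 1 ∈ J) :
    latticeIdeal R L ≤ J := by
  rw [latticeIdeal, Ideal.span_le]
  rintro _ ⟨c, hc, rfl⟩
  have hpos := prod_X_pow_eq_monomial_of_fintype (R := R)
    (Finsupp.equivFunOnFinite.symm fun i => (c i).toNat)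
  have hneg := prod_X_pow_eq_monomial_of_fintype (R := R)
    (Finsupp.equivFunOnFinite.symm fun i => (-c i).toNat)
  simp only [Finsupp.coe_equivFunOnFinite_symm] at hpos hneg
  rw [hpos, hneg]
  refine h _ _ ?_
  convert hc using 1
  ext i
  simp only [Finsupp.coe_equivFunOnFinite_symm]
  omega

end latticeIdeal

theorem LinearIndependent.sum_fiber_eq_zero {ι α M : Type*} [Ring R] [AddCommGroup M] [Module R M]
    [DecidableEq α] {e : α → M} (he : LinearIndependent R e) {s : Finset ι} {w : ι → α}
    {c : ι → R} (h : ∑ i ∈ s, c i • e (w i) = 0) (a : α) : ∑ i ∈ s with w i = a, c i = 0 := by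
  by_cases ha : a ∈ s.image w
  · refine linearIndependent_iff'.mp he (s.image w) (fun b => ∑ i ∈ s with w i = b, c i) ?_ a ha
    rw [← h, ← sum_fiberwise_of_maps_to fun i hi => mem_image_of_mem w hi]
    refine sum_congr rfl fun b _ => ?_
    rw [sum_smul]
    exact sum_congr rfl fun i hi => by rw [(mem_filter.mp hi).2]
  · refine sum_eq_zero fun i hi => absurd ?_ ha
    rw [← (mem_filter.mp hi).2]
    exact mem_image_of_mem w (mem_filter.mp hi).1

section fibers

variable [CommRing R] {α : Type*} [DecidableEq α]

theorem sum_coeff_fiber_eq_zero_of_map_eq_zero {M : Type*} [AddCommGroup M] [Module R M]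
    (Φ : MvPolynomial σ R →ₗ[R] M) {e : α → M} (he : LinearIndependent R e)
    (w : (σ →₀ ℕ) → α) (hΦ : ∀ m, Φ (monomial m 1) = e (w m)) {f : MvPolynomial σ R}
    (hf : Φ f = 0) (a : α) : ∑ m ∈ f.support with w m = a, f.coeff m = 0 := by
  refine he.sum_fiber_eq_zero ?_ a
  conv_rhs => rw [← hf, f.as_sum, map_sum]
  refine sum_congr rfl fun m _ => ?_
  rw [← hΦ, ← map_smul, smul_monomial, smul_eq_mul, mul_one]

theorem mem_of_sum_coeff_fiber_eq_zero {I : Ideal (MvPolynomial σ R)} (w : (σ →₀ ℕ) → α)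
    {f : MvPolynomial σ R} (hsum : ∀ a, ∑ m ∈ f.support with w m = a, f.coeff m = 0)
    (hbin : ∀ m ∈ f.support, ∀ m' ∈ f.support, w m = w m' →
      monomial m 1 - monomial m' 1 ∈ I) : f ∈ I := by
  -- `ρ a` is a representative in `f.support` of the class `w ⁻¹' {a}`
  choose! ρ hρ using fun a (ha : a ∈ f.support.image w) => mem_image.mp ha
  have hρ' : ∀ m ∈ f.support, ρ (w m) ∈ f.support ∧ w (ρ (w m)) = w m :=
    fun m hm => hρ _ (mem_image_of_mem w hm)
  have hrest : ∑ m ∈ f.support, monomial (ρ (w m)) (f.coeff m) = 0 := by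
    rw [← sum_fiberwise_of_maps_to fun m hm => mem_image_of_mem w hm]
    refine sum_eq_zero fun a _ => ?_
    rw [sum_congr rfl fun m hm => by rw [(mem_filter.mp hm).2], ← map_sum, hsum a, map_zero]
  have hsplit : f = ∑ m ∈ f.support, C (f.coeff m) * (monomial m 1 - monomial (ρ (w m)) 1) := by
    conv_lhs => rw [f.as_sum]
    rw [← sub_eq_zero, ← sum_sub_distrib, ← hrest]
    refine sum_congr rfl fun m _ => ?_
    rw [mul_sub, C_mul_monomial, C_mul_monomial, mul_one, sub_sub_cancel]
  rw [hsplit]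
  exact sum_mem fun m hm =>
    Ideal.mul_mem_left _ _ (hbin m hm _ (hρ' m hm).1 (hρ' m hm).2.symm)

end fibers

section toric

variable [CommRing R] [Fintype σ]

theorem aeval_X_pow_monomial (d : σ → ℕ) (m : σ →₀ ℕ) :
    aeval (fun i => (Polynomial.X : Polynomial R) ^ d i) (monomial m (1 : R)) =
      Polynomial.X ^ ∑ i, d i * m i := by
  rw [aeval_monomial, map_one, one_mul, Finsupp.prod_fintype _ _ fun _ => pow_zero _]
  simp only [← pow_mul, prod_pow_eq_pow_sum]

theorem ker_aeval_X_pow_eq_latticeIdeal (d : σ → ℕ) {L : Submodule ℤ (σ → ℤ)}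
    (hL : ∀ c, c ∈ L ↔ ∑ i, c i * d i = 0) :
    RingHom.ker (aeval (fun i => (Polynomial.X : Polynomial R) ^ d i) :
      MvPolynomial σ R →ₐ[R] Polynomial R) = latticeIdeal R L := by
  classical
  have hw : ∀ m m' : σ →₀ ℕ,
      ∑ i, d i * m i = ∑ i, d i * m' i ↔ (fun i => (m i : ℤ) - m' i) ∈ L := by
    intro m m'
    rw [hL, ← Nat.cast_inj (R := ℤ), ← sub_eq_zero]
    push_cast
    simp only [← sum_sub_distrib, ← mul_sub, mul_comm]
  have hΦ : ∀ m, (aeval fun i => (Polynomial.X : Polynomial R) ^ d i).toLinearMap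
      (monomial m (1 : R)) = Polynomial.basisMonomials R (∑ i, d i * m i) := by
    intro m
    simp only [Polynomial.coe_basisMonomials, ← Polynomial.X_pow_eq_monomial]
    exact aeval_X_pow_monomial d m
  refine le_antisymm (fun f hf => ?_)
    (latticeIdeal_le_of_monomial_sub_monomial_mem fun m m' h => ?_)
  · exact mem_of_sum_coeff_fiber_eq_zero (fun m => ∑ i, d i * m i)
      (sum_coeff_fiber_eq_zero_of_map_eq_zero _ (Polynomial.basisMonomials R).linearIndependent
        _ hΦ hf)
      fun m _ m' _ h => monomial_sub_monomial_mem_latticeIdeal ((hw m m').1 h)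
  · rw [RingHom.mem_ker, map_sub, aeval_X_pow_monomial, aeval_X_pow_monomial, (hw m m').2 h,
      sub_self]

end toric

section torus

variable (K : Type*) [Field K] [Fintype σ]

def torusCharacter (v : σ → ℕ) (m : σ →₀ ℕ) : (σ → Kˣ) →* K where
  toFun x := ∏ i, (x i : K) ^ (v i * m i)
  map_one' := by simp
  map_mul' x y := by simp [mul_pow, prod_mul_distrib]

variable {K}

theorem eval_pow_monomial_eq_torusCharacter (v : σ → ℕ) (m : σ →₀ ℕ) (x : σ → Kˣ) :
    eval (fun i => (x i : K) ^ v i) (monomial m 1) = torusCharacter K v m x := by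
  rw [eval_monomial, one_mul, Finsupp.prod_fintype _ _ fun _ => pow_zero _]
  simp only [← pow_mul]
  rfl

theorem torusCharacter_eq_iff {β : Kˣ} (hβ : ∀ x : Kˣ, x ∈ Subgroup.zpowers β) (v : σ → ℕ)
    (m m' : σ →₀ ℕ) : torusCharacter K v m = torusCharacter K v m' ↔
      ∀ i, (orderOf (β ^ v i) : ℤ) ∣ m i - m' i := by
  classical
  have hdvd : ∀ i, (orderOf (β ^ v i) : ℤ) ∣ m i - m' i ↔ (β ^ v i) ^ m i = (β ^ v i) ^ m' i :=
    fun i => by rw [pow_eq_pow_iff_modEq, Nat.modEq_iff_dvd, dvd_sub_comm]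
  simp only [hdvd]
  constructor
  · intro h i
    have hsingle : ∀ m : σ →₀ ℕ, torusCharacter K v m (Pi.mulSingle i β) = ↑((β ^ v i) ^ m i) :=
      fun m => by
        rw [torusCharacter, MonoidHom.coe_mk, OneHom.coe_mk, prod_eq_single i
          (fun j _ hj => by rw [Pi.mulSingle_eq_of_ne hj, Units.val_one, one_pow])
          (fun h => (h (mem_univ i)).elim), Pi.mulSingle_eq_same, pow_mul, Units.val_pow_eq_pow_val,
          Units.val_pow_eq_pow_val]
    exact Units.val_injective (by rw [← hsingle, ← hsingle, h])
  · intro h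
    refine MonoidHom.ext fun x => prod_congr rfl fun i _ => ?_
    obtain ⟨k, hk⟩ := hβ (x i)
    have hpow : ∀ m : ℕ, x i ^ (v i * m) = ((β ^ v i) ^ m) ^ k := fun m => by
      rw [← hk, ← pow_mul, ← zpow_natCast, ← zpow_natCast, ← zpow_mul, ← zpow_mul, mul_comm]
    simp only [← Units.val_pow_eq_pow_val, hpow, h i]

theorem span_homogeneous_vanishing_eq_latticeIdeal {β : Kˣ}
    (hβ : ∀ x : Kˣ, x ∈ Subgroup.zpowers β) (v : σ → ℕ) {L : Submodule ℤ (σ → ℤ)}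
    (hL : ∀ c, c ∈ L ↔ (∀ i, (orderOf (β ^ v i) : ℤ) ∣ c i) ∧ ∑ i, c i = 0) :
    Ideal.span {f : MvPolynomial σ K | (∃ e, f.IsHomogeneous e) ∧
      ∀ x : σ → Kˣ, eval (fun i => (x i : K) ^ v i) f = 0} = latticeIdeal K L := by
  classical
  have hdeg : ∀ m m' : σ →₀ ℕ, m.degree = m'.degree ↔ ∑ i, ((m i : ℤ) - m' i) = 0 := by
    intro m m'
    rw [sum_sub_distrib, sub_eq_zero, Finsupp.degree_eq_sum, Finsupp.degree_eq_sum]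
    exact_mod_cast Iff.rfl
  have hw : ∀ m m' : σ →₀ ℕ, m.degree = m'.degree →
      (torusCharacter K v m = torusCharacter K v m' ↔ (fun i => (m i : ℤ) - m' i) ∈ L) := by
    intro m m' hmm'
    rw [torusCharacter_eq_iff hβ, hL, iff_self_and]
    exact fun _ => (hdeg m m').1 hmm'
  have hΦ : ∀ m, (LinearMap.pi fun x : σ → Kˣ => (aeval fun i => (x i : K) ^ v i).toLinearMap)
      (monomial m (1 : K)) = ⇑(torusCharacter K v m) :=
    fun m => funext fun x => eval_pow_monomial_eq_torusCharacter v m x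
  refine le_antisymm (Ideal.span_le.2 ?_)
    (latticeIdeal_le_of_monomial_sub_monomial_mem fun m m' h => Ideal.subset_span ?_)
  · rintro f ⟨⟨e, hfe⟩, hf⟩
    have hsupp : ∀ m ∈ f.support, m.degree = e := fun m hm =>
      by_contra fun h => mem_support_iff.1 hm (hfe.coeff_eq_zero h)
    exact mem_of_sum_coeff_fiber_eq_zero (torusCharacter K v)
      (sum_coeff_fiber_eq_zero_of_map_eq_zero _ (linearIndependent_monoidHom _ K) _ hΦ
        (funext hf))
      fun m hm m' hm' h => monomial_sub_monomial_mem_latticeIdeal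
        ((hw m m' ((hsupp m hm).trans (hsupp m' hm').symm)).1 h)
  · have hmm' : m.degree = m'.degree := (hdeg m m').2 ((hL _).1 h).2
    refine ⟨⟨m.degree, (isHomogeneous_monomial _ rfl).sub (isHomogeneous_monomial _ hmm'.symm)⟩,
      fun x => ?_⟩
    rw [map_sub, eval_pow_monomial_eq_torusCharacter, eval_pow_monomial_eq_torusCharacter,
      (hw m m' hmm').2 h, sub_self]

end torus

theorem mem_map_ker_iff_dvd_and_sum_eq_zero [Fintype σ] {d : σ → ℤ} {ψ : (σ → ℤ) →ₗ[ℤ] ℤ}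
    (hψ : ∀ c, ψ c = ∑ i, c i * d i) {D : (σ → ℤ) →ₗ[ℤ] (σ → ℤ)} (hD : ∀ c i, D c i = d i * c i)
    (c : σ → ℤ) : c ∈ (LinearMap.ker ψ).map D ↔ (∀ i, d i ∣ c i) ∧ ∑ i, c i = 0 := by
  constructor
  · rintro ⟨c', hc', rfl⟩
    refine ⟨fun i => hD c' i ▸ dvd_mul_right _ _, ?_⟩
    rw [← LinearMap.mem_ker.mp hc', hψ]
    exact sum_congr rfl fun i _ => by rw [hD, mul_comm]
  · rintro ⟨hdvd, hsum⟩
    refine ⟨fun i => c i / d i, ?_, funext fun i => ?_⟩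
    · rw [SetLike.mem_coe, LinearMap.mem_ker, hψ, ← hsum]
      exact sum_congr rfl fun i _ => Int.ediv_mul_cancel (hdvd i)
    · rw [hD]
      exact Int.mul_ediv_cancel' (hdvd i)

theorem toric_and_vanishing_are_lattice_ideals_general
    (K : Type) [Field K] (n : ℕ)
    (v : Fin n → ℕ)
    (β : Kˣ) (hβ : ∀ x : Kˣ, x ∈ Subgroup.zpowers β)
    (d : Fin n → ℕ) (hd : ∀ i, d i = orderOf (β ^ v i))
    (IX : Ideal (MvPolynomial (Fin n) K))
    (hIX : IX = Ideal.span {f : MvPolynomial (Fin n) K |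
      (∃ e, f.IsHomogeneous e) ∧
      ∀ x : Fin n → Kˣ, eval (fun i => (x i : K) ^ v i) f = 0})
    (P : Ideal (MvPolynomial (Fin n) K))
    (hP : P = RingHom.ker (aeval (fun i : Fin n => (Polynomial.X : Polynomial K) ^ d i) :
      MvPolynomial (Fin n) K →ₐ[K] Polynomial K))
    (ψ : (Fin n → ℤ) →ₗ[ℤ] ℤ) (hψ : ∀ c, ψ c = ∑ i, c i * (d i : ℤ))
    (D : (Fin n → ℤ) →ₗ[ℤ] (Fin n → ℤ)) (hD : ∀ c i, D c i = (d i : ℤ) * c i) :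
    P = Ideal.span {f : MvPolynomial (Fin n) K | ∃ c ∈ LinearMap.ker ψ,
        f = (∏ i, X i ^ (c i).toNat) - ∏ i, X i ^ (-(c i)).toNat} ∧
    IX = Ideal.span {f : MvPolynomial (Fin n) K |
        ∃ c ∈ Submodule.map D (LinearMap.ker ψ),
        f = (∏ i, X i ^ (c i).toNat) - ∏ i, X i ^ (-(c i)).toNat} := by
  subst hIX hP
  refine ⟨ker_aeval_X_pow_eq_latticeIdeal d fun c => by rw [LinearMap.mem_ker, hψ],
    span_homogeneous_vanishing_eq_latticeIdeal hβ v fun c => ?_⟩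
  simp only [← hd]
  exact mem_map_ker_iff_dvd_and_sum_eq_zero hψ hD c

/-- **Proposition.** Let `K = 𝔽_q`, `β` a generator of `Kˣ`, `d i = orderOf (β ^ v i)`.
Let `ψ : ℤⁿ → ℤ` be the map `e i ↦ d i` and `D : ℤⁿ → ℤⁿ` the map `e i ↦ d i • e i`.
Then the toric ideal `P` (kernel of `t_i ↦ y ^ d i`) is the lattice ideal of
`L₁ = ker ψ`, and the vanishing ideal `IX` of the degenerate projective torus
parameterized by `x_i ^ v_i` is the lattice ideal of `L = D (ker ψ)`; here the lattice
ideal of a lattice `L ⊆ ℤⁿ` is generated by the binomials `t^{c⁺} - t^{c⁻}` for `c ∈ L`. -/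
theorem toric_and_vanishing_are_lattice_ideals
    (K : Type) [Field K] [Fintype K] (n : ℕ) (hn : 2 ≤ n)
    (v : Fin n → ℕ) (hv : ∀ i, 0 < v i)
    (β : Kˣ) (hβ : ∀ x : Kˣ, x ∈ Subgroup.zpowers β)
    (d : Fin n → ℕ) (hd : ∀ i, d i = orderOf (β ^ v i))
    (IX : Ideal (MvPolynomial (Fin n) K))
    (hIX : IX = Ideal.span {f : MvPolynomial (Fin n) K |
      (∃ e, f.IsHomogeneous e) ∧
      ∀ x : Fin n → Kˣ, eval (fun i => (x i : K) ^ v i) f = 0})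
    (P : Ideal (MvPolynomial (Fin n) K))
    (hP : P = RingHom.ker (aeval (fun i : Fin n => (Polynomial.X : Polynomial K) ^ d i) :
      MvPolynomial (Fin n) K →ₐ[K] Polynomial K))
    (ψ : (Fin n → ℤ) →ₗ[ℤ] ℤ) (hψ : ∀ c, ψ c = ∑ i, c i * (d i : ℤ))
    (D : (Fin n → ℤ) →ₗ[ℤ] (Fin n → ℤ)) (hD : ∀ c i, D c i = (d i : ℤ) * c i) :
    P = Ideal.span {f : MvPolynomial (Fin n) K | ∃ c ∈ LinearMap.ker ψ,
        f = (∏ i, X i ^ (c i).toNat) - ∏ i, X i ^ (-(c i)).toNat} ∧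
    IX = Ideal.span {f : MvPolynomial (Fin n) K |
        ∃ c ∈ Submodule.map D (LinearMap.ker ψ),
        f = (∏ i, X i ^ (c i).toNat) - ∏ i, X i ^ (-(c i)).toNat} :=
  toric_and_vanishing_are_lattice_ideals_general K n v β hβ d hd IX hIX P hP ψ hψ D hD
end

section
/- Assume gcd(d_1, …, d_n) = 1. Then the lattice L = D(ker ψ) ⊆ ℤ^n is generated as a subgroup of ℤ^n by the vectors c_{ij}·e_i − c_{ij}·e_j for 1 ≤ i < j ≤ n, where c_{ij} = lcm(d_i, d_j), ψ: ℤ^n → ℤ is the ℤ-linear map with ψ(e_i) = d_i, and D: ℤ^n → ℤ^n is the ℤ-linear map with D(e_i) = d_i e_i. -/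
/-!
A vector `x` lies in `D (ker ψ)` exactly when `d i ∣ x i` for all `i` and `∑ i, x i = 0`.
Such an `x` is cleared one coordinate at a time. If `x` is supported on `insert a s`, then
`x a = -∑ i ∈ s, x i` is divisible by `d a` and by `gcd_{i ∈ s} d i`, hence by
`lcm (gcd_{i ∈ s} d i) (d a) = gcd_{i ∈ s} lcm (d i) (d a)` (lcm distributes over gcd).
By Bézout, `x a = ∑ i ∈ s, t i * lcm (d i) (d a)`, and adding
`∑ i ∈ s, t i • (lcm (d i) (d a) • (e i - e a))` to `x` gives a vector of the same kind
supported on `s`.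
-/

open Submodule

theorem Nat.lcm_gcd_distrib_right (a b c : ℕ) :
    Nat.lcm (Nat.gcd a b) c = Nat.gcd (Nat.lcm a c) (Nat.lcm b c) := by
  rcases eq_or_ne a 0 with rfl | ha
  · simp
  rcases eq_or_ne b 0 with rfl | hb
  · simp
  rcases eq_or_ne c 0 with rfl | hc
  · simp
  refine Nat.eq_of_factorization_eq (Nat.lcm_ne_zero (Nat.gcd_ne_zero_left ha) hc)
    (Nat.gcd_ne_zero_left (Nat.lcm_ne_zero ha hc)) fun p => ?_
  simp [Nat.factorization_lcm, Nat.factorization_gcd, ha, hb, hc, max_min_distrib_right]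

theorem Nat.lcm_finsetGcd_right {ι : Type*} (s : Finset ι) (f : ι → ℕ) (c : ℕ) :
    Nat.lcm (s.gcd f) c = s.gcd fun i => Nat.lcm (f i) c := by
  classical
  induction s using Finset.induction_on with
  | empty => simp
  | insert a s _ ih =>
    rw [Finset.gcd_insert, Finset.gcd_insert, gcd_eq_nat_gcd, gcd_eq_nat_gcd, ← ih,
      Nat.lcm_gcd_distrib_right]

theorem Int.finsetGcd_natCast {ι : Type*} (s : Finset ι) (f : ι → ℕ) :
    (s.gcd fun i => (f i : ℤ)) = ((s.gcd f : ℕ) : ℤ) := by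
  classical
  induction s using Finset.induction_on with
  | empty => simp
  | insert a s _ ih => simp [Finset.gcd_insert, ih, ← Int.coe_gcd, gcd_eq_nat_gcd]

theorem exists_eq_sum_mul_lcm {ι : Type*} (s : Finset ι) (f : ι → ℕ) (c : ℕ) {z : ℤ}
    (hc : (c : ℤ) ∣ z) (hs : ((s.gcd f : ℕ) : ℤ) ∣ z) :
    ∃ t : ι → ℤ, z = ∑ i ∈ s, t i * (Nat.lcm (f i) c : ℤ) := by
  obtain ⟨u, hu⟩ := Finset.gcd_eq_sum_mul s fun i => (Nat.lcm (f i) c : ℤ)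
  obtain ⟨k, rfl⟩ : ((s.gcd fun i => Nat.lcm (f i) c : ℕ) : ℤ) ∣ z := by
    rw [← Nat.lcm_finsetGcd_right]
    exact Int.natCast_dvd.mpr (Nat.lcm_dvd (Int.natCast_dvd.mp hs) (Int.natCast_dvd.mp hc))
  refine ⟨fun i => u i * k, ?_⟩
  rw [← Int.finsetGcd_natCast, hu, Finset.sum_mul]
  exact Finset.sum_congr rfl fun i _ => by ring

variable {ι : Type*} (d : ι → ℕ)

def lcmDiff [DecidableEq ι] (i j : ι) : ι → ℤ :=
  Pi.single i (Nat.lcm (d i) (d j) : ℤ) - Pi.single j (Nat.lcm (d i) (d j) : ℤ)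

theorem lcmDiff_swap [DecidableEq ι] (i j : ι) : lcmDiff d j i = -lcmDiff d i j := by
  rw [lcmDiff, lcmDiff, Nat.lcm_comm, neg_sub]

theorem lcmDiff_self [DecidableEq ι] (i : ι) : lcmDiff d i i = 0 :=
  sub_self _

theorem sum_smul_lcmDiff_apply_of_notMem [DecidableEq ι] {s : Finset ι} (t : ι → ℤ) (a : ι)
    {k : ι} (hk : k ∉ s) :
    (∑ i ∈ s, t i • lcmDiff d i a) k =
      -if k = a then ∑ i ∈ s, t i * (Nat.lcm (d i) (d a) : ℤ) else 0 := by
  split_ifs with hka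
  · subst hka
    simp [lcmDiff, Finset.sum_apply, Pi.single_apply, mul_sub, Finset.sum_ite_eq, hk]
  · simp [lcmDiff, Finset.sum_apply, Pi.single_apply, mul_sub, Finset.sum_ite_eq, hk, hka]

theorem span_lcmDiff_of_lt [LinearOrder ι] :
    span ℤ {x | ∃ i j, i < j ∧ x = lcmDiff d i j} =
      span ℤ (Set.range (Function.uncurry (lcmDiff d))) := by
  refine le_antisymm (span_mono fun _ ⟨i, j, _, hx⟩ => ⟨(i, j), hx.symm⟩) (span_le.mpr ?_)
  rintro _ ⟨⟨i, j⟩, rfl⟩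
  rcases lt_trichotomy i j with h | rfl | h
  · exact subset_span ⟨i, j, h, rfl⟩
  · simp [lcmDiff_self]
  · simpa [lcmDiff_swap d j i] using neg_mem (subset_span ⟨j, i, h, rfl⟩ :
      lcmDiff d j i ∈ span ℤ {x | ∃ i j, i < j ∧ x = lcmDiff d i j})

def zeroSumMultiples [Fintype ι] : Submodule ℤ (ι → ℤ) :=
  pi Set.univ (fun i => Ideal.span {(d i : ℤ)}) ⊓ LinearMap.ker (∑ i, LinearMap.proj i)

theorem mem_zeroSumMultiples [Fintype ι] {d : ι → ℕ} {x : ι → ℤ} :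
    x ∈ zeroSumMultiples d ↔ (∀ i, (d i : ℤ) ∣ x i) ∧ ∑ i, x i = 0 := by
  simp [zeroSumMultiples, mem_pi, Ideal.mem_span_singleton]

section Finite

variable [Fintype ι] [DecidableEq ι]

theorem lcmDiff_mem_zeroSumMultiples (i j : ι) : lcmDiff d i j ∈ zeroSumMultiples d := by
  refine mem_zeroSumMultiples.mpr ⟨fun k => ?_, by simp [lcmDiff]⟩
  simp only [lcmDiff, Pi.sub_apply, Pi.single_apply]
  split_ifs <;> subst_vars <;>
    simp [Int.natCast_dvd_natCast.mpr (Nat.dvd_lcm_left _ _),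
      Int.natCast_dvd_natCast.mpr (Nat.dvd_lcm_right _ _)]

theorem mem_span_lcmDiff_of_support_subset (s : Finset ι) {x : ι → ℤ}
    (hx : x ∈ zeroSumMultiples d) (hxs : ∀ i ∉ s, x i = 0) :
    x ∈ span ℤ (Set.range (Function.uncurry (lcmDiff d))) := by
  induction s using Finset.induction_on generalizing x with
  | empty =>
    obtain rfl : x = 0 := funext fun i => hxs i (Finset.notMem_empty i)
    exact zero_mem _
  | insert a s has ih =>
    obtain ⟨hdvd, hsum⟩ := mem_zeroSumMultiples.mp hx
    have hxa : x a = -∑ i ∈ s, x i := by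
      rw [← Finset.sum_subset (Finset.subset_univ _) fun i _ hi => hxs i hi,
        Finset.sum_insert has] at hsum
      linarith
    have hgcd : ((s.gcd d : ℕ) : ℤ) ∣ x a := hxa ▸ dvd_neg.mpr (Finset.dvd_sum fun i hi =>
      (Int.natCast_dvd_natCast.mpr (Finset.gcd_dvd hi)).trans (hdvd i))
    obtain ⟨t, ht⟩ := exists_eq_sum_mul_lcm s d (d a) (hdvd a) hgcd
    have hy : x + ∑ i ∈ s, t i • lcmDiff d i a ∈
        span ℤ (Set.range (Function.uncurry (lcmDiff d))) := by
      refine ih (add_mem hx (sum_mem fun i _ => smul_mem _ _ (lcmDiff_mem_zeroSumMultiples d i a)))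
        fun k hk => ?_
      rw [Pi.add_apply, sum_smul_lcmDiff_apply_of_notMem d t a hk]
      by_cases hka : k = a
      · rw [if_pos hka, hka, ht, add_neg_cancel]
      · rw [if_neg hka, neg_zero, add_zero, hxs k (by simp [hka, hk])]
    simpa using sub_mem hy
      (sum_mem (t := s) fun i _ => smul_mem _ (t i) (subset_span ⟨(i, a), rfl⟩))

theorem zeroSumMultiples_le_span_lcmDiff :
    zeroSumMultiples d ≤ span ℤ (Set.range (Function.uncurry (lcmDiff d))) :=
  fun _ hx => mem_span_lcmDiff_of_support_subset d Finset.univ hx fun i hi =>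
    absurd (Finset.mem_univ i) hi

end Finite

section LinearMaps

variable {d} [Fintype ι] {ψ : (ι → ℤ) →ₗ[ℤ] ℤ} {D : (ι → ℤ) →ₗ[ℤ] (ι → ℤ)}

theorem apply_eq_sum_apply (hψ : ∀ c, ψ c = ∑ i, c i * (d i : ℤ))
    (hD : ∀ c i, D c i = (d i : ℤ) * c i) (c : ι → ℤ) : ψ c = ∑ i, D c i := by
  simp only [hψ, hD, mul_comm]

theorem map_ker_le_zeroSumMultiples (hψ : ∀ c, ψ c = ∑ i, c i * (d i : ℤ))
    (hD : ∀ c i, D c i = (d i : ℤ) * c i) :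
    map D (LinearMap.ker ψ) ≤ zeroSumMultiples d := by
  rintro _ ⟨c, hc, rfl⟩
  refine mem_zeroSumMultiples.mpr ⟨fun i => hD c i ▸ dvd_mul_right _ _, ?_⟩
  rw [← apply_eq_sum_apply hψ hD, LinearMap.mem_ker.mp hc]

theorem lcmDiff_mem_map_ker [DecidableEq ι] (hψ : ∀ c, ψ c = ∑ i, c i * (d i : ℤ))
    (hD : ∀ c i, D c i = (d i : ℤ) * c i) (i j : ι) :
    lcmDiff d i j ∈ map D (LinearMap.ker ψ) := by
  set c : ι → ℤ := Pi.single i ((Nat.lcm (d i) (d j) : ℤ) / d i) -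
    Pi.single j ((Nat.lcm (d i) (d j) : ℤ) / d j)
  have hDc : D c = lcmDiff d i j := by
    funext k
    rw [hD]
    simp only [c, lcmDiff, Pi.sub_apply, Pi.single_apply]
    split_ifs <;> subst_vars <;>
      simp [Int.mul_ediv_cancel', Int.natCast_dvd_natCast, Nat.dvd_lcm_left, Nat.dvd_lcm_right]
  refine ⟨c, LinearMap.mem_ker.mpr ?_, hDc⟩
  rw [apply_eq_sum_apply hψ hD, hDc]
  exact (mem_zeroSumMultiples.mp (lcmDiff_mem_zeroSumMultiples d i j)).2

end LinearMaps

theorem lattice_generated_by_lcm_differences_general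
    (n : ℕ)
    (d : Fin n → ℕ)
    (ψ : (Fin n → ℤ) →ₗ[ℤ] ℤ) (hψ : ∀ c, ψ c = ∑ i, c i * (d i : ℤ))
    (D : (Fin n → ℤ) →ₗ[ℤ] (Fin n → ℤ)) (hD : ∀ c i, D c i = (d i : ℤ) * c i) :
    Submodule.map D (LinearMap.ker ψ) =
      Submodule.span ℤ {x : Fin n → ℤ | ∃ i j : Fin n, i < j ∧
        x = Pi.single i (Nat.lcm (d i) (d j) : ℤ) - Pi.single j (Nat.lcm (d i) (d j) : ℤ)} := by
  change _ = span ℤ {x | ∃ i j, i < j ∧ x = lcmDiff d i j}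
  rw [span_lcmDiff_of_lt]
  refine le_antisymm ((map_ker_le_zeroSumMultiples hψ hD).trans
    (zeroSumMultiples_le_span_lcmDiff d)) (span_le.mpr ?_)
  rintro _ ⟨⟨i, j⟩, rfl⟩
  exact lcmDiff_mem_map_ker hψ hD i j

/-- **Claim.** Let `d 1, …, d n` be positive integers with `gcd(d 1, …, d n) = 1`.
Let `ψ : ℤⁿ → ℤ` be the map `e i ↦ d i` and `D : ℤⁿ → ℤⁿ` the map `e i ↦ d i • e i`.
Then the lattice `L = D (ker ψ)` is generated, as a subgroup of `ℤⁿ` (equivalently as a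
`ℤ`-submodule), by the vectors `c_{ij} • e i - c_{ij} • e j` for `i < j`, where
`c_{ij} = lcm (d i) (d j)`. -/
theorem lattice_generated_by_lcm_differences
    (n : ℕ) (hn : 2 ≤ n)
    (d : Fin n → ℕ) (hd : ∀ i, 0 < d i)
    (hgcd : Finset.univ.gcd d = 1)
    (ψ : (Fin n → ℤ) →ₗ[ℤ] ℤ) (hψ : ∀ c, ψ c = ∑ i, c i * (d i : ℤ))
    (D : (Fin n → ℤ) →ₗ[ℤ] (Fin n → ℤ)) (hD : ∀ c i, D c i = (d i : ℤ) * c i) :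
    Submodule.map D (LinearMap.ker ψ) =
      Submodule.span ℤ {x : Fin n → ℤ | ∃ i j : Fin n, i < j ∧
        x = Pi.single i (Nat.lcm (d i) (d j) : ℤ) - Pi.single j (Nat.lcm (d i) (d j) : ℤ)} :=
  lattice_generated_by_lcm_differences_general n d ψ hψ D hD
end
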